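/- arXiv:2211.07844 — 4 statements merged into one kernel-verified Lean document; each statement's English description precedes it below -/
import Mathlib

section
/- Let φ(z) = max(0, z) be applied entrywise, let X ∈ ℝ^{n×d} be nonzero with m ≥ d, and let W be a random m×d matrix such that W and −W have the same distribution and W is almost surely of full rank d. Let K_outer = φ(X Wᵀ) φ(X Wᵀ)ᵀ (the outer-layer NTK Gram matrix, with entries ⟨φ(W x_i), φ(W x_j)⟩). Then with probability at least 1/2: φ(W Xᵀ) ≠ 0 and Tr(K_outer)/λ_1(K_outer) ≤ 4 · (‖W‖₂²/σ_min(W)²) · Tr(X Xᵀ)/λ_1(X Xᵀ). -/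
open MeasureTheory Matrix

/-- The largest eigenvalue of a symmetric matrix, expressed as the supremum of the
Rayleigh quotient over the unit sphere. -/
noncomputable def lamMax {n : ℕ} (A : Matrix (Fin n) (Fin n) ℝ) : ℝ :=
  sSup {t | ∃ u : Fin n → ℝ, (∑ i, u i ^ 2) = 1 ∧ t = ∑ i, ∑ j, u i * A i j * u j}

/-- Operator (spectral) norm of a rectangular real matrix. -/
noncomputable def opNorm {m n : ℕ} (A : Matrix (Fin m) (Fin n) ℝ) : ℝ :=
  sSup {t | ∃ u : Fin n → ℝ, (∑ j, u j ^ 2) = 1 ∧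
    t = Real.sqrt (∑ i, (∑ j, A i j * u j) ^ 2)}

/-- Smallest singular value of a rectangular real matrix. -/
noncomputable def sigMin {m n : ℕ} (A : Matrix (Fin m) (Fin n) ℝ) : ℝ :=
  sInf {t | ∃ u : Fin n → ℝ, (∑ j, u j ^ 2) = 1 ∧
    t = Real.sqrt (∑ i, (∑ j, A i j * u j) ^ 2)}

instance matrixMeasurableSpace {m d : ℕ} : MeasurableSpace (Matrix (Fin m) (Fin d) ℝ) :=
  (inferInstance : MeasurableSpace (Fin m → Fin d → ℝ))

/-- Entrywise ReLU. -/
def reluM {m n : ℕ} (A : Matrix (Fin m) (Fin n) ℝ) : Matrix (Fin m) (Fin n) ℝ :=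
  A.map fun z => max 0 z

section
variable {k p q : ℕ}

lemma exists_unit (hk : 0 < k) : ∃ u : Fin k → ℝ, (∑ i, u i ^ 2) = 1 := by
  refine ⟨fun i => if i = ⟨0, hk⟩ then 1 else 0, ?_⟩
  have : ∀ i : Fin k, ((if i = ⟨0, hk⟩ then (1:ℝ) else 0)) ^ 2
      = if i = ⟨0, hk⟩ then 1 else 0 := by intro i; split <;> norm_num
  rw [Finset.sum_congr rfl fun i _ => this i, Finset.sum_ite_eq']
  simp

lemma quad_gram (M : Matrix (Fin p) (Fin q) ℝ) (u : Fin p → ℝ) :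
    (∑ i, ∑ j, u i * (M * Mᵀ) i j * u j) = ∑ j, (∑ i, u i * M i j) ^ 2 := by
  have h : ∀ i i' : Fin p, u i * (M * Mᵀ) i i' * u i'
      = ∑ j, (u i * M i j) * (u i' * M i' j) := by
    intro i i'
    simp only [mul_apply, transpose_apply, Finset.mul_sum, Finset.sum_mul]
    exact Finset.sum_congr rfl fun j _ => by ring
  calc (∑ i, ∑ i', u i * (M * Mᵀ) i i' * u i')
      = ∑ i, ∑ j, ∑ i', (u i * M i j) * (u i' * M i' j) := by
        simp_rw [h]; exact Finset.sum_congr rfl fun i _ => Finset.sum_comm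
    _ = ∑ j, ∑ i, ∑ i', (u i * M i j) * (u i' * M i' j) := Finset.sum_comm
    _ = ∑ j, (∑ i, u i * M i j) ^ 2 := by
        refine Finset.sum_congr rfl fun j _ => ?_
        rw [sq, Finset.sum_mul_sum]

lemma trace_gram (M : Matrix (Fin p) (Fin q) ℝ) :
    (M * Mᵀ).trace = ∑ i, ∑ j, (M i j) ^ 2 := by
  simp [Matrix.trace, Matrix.diag, mul_apply, sq]

lemma quad_gram_le (M : Matrix (Fin p) (Fin q) ℝ) (u : Fin p → ℝ)
    (hu : (∑ i, u i ^ 2) = 1) :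
    (∑ j, (∑ i, u i * M i j) ^ 2) ≤ ∑ i, ∑ j, (M i j) ^ 2 := by
  rw [Finset.sum_comm]
  refine Finset.sum_le_sum fun j _ => ?_
  calc (∑ i, u i * M i j) ^ 2 ≤ (∑ i, u i ^ 2) * ∑ i, (M i j) ^ 2 :=
        Finset.sum_mul_sq_le_sq_mul_sq _ _ _
    _ = ∑ i, (M i j) ^ 2 := by rw [hu, one_mul]

lemma le_lamMax_gram (M : Matrix (Fin p) (Fin q) ℝ) (u : Fin p → ℝ)
    (hu : (∑ i, u i ^ 2) = 1) :
    (∑ j, (∑ i, u i * M i j) ^ 2) ≤ lamMax (M * Mᵀ) := by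
  apply le_csSup
  · exact ⟨∑ i, ∑ j, (M i j) ^ 2, fun t ⟨v, hv, ht⟩ => by
      rw [ht, quad_gram]; exact quad_gram_le M v hv⟩
  · exact ⟨u, hu, (quad_gram M u).symm⟩

lemma lamMax_gram_nonneg (M : Matrix (Fin p) (Fin q) ℝ) : 0 ≤ lamMax (M * Mᵀ) :=
  Real.sSup_nonneg fun t ⟨u, _, ht⟩ => by rw [ht, quad_gram]; positivity

lemma lamMax_le (A : Matrix (Fin p) (Fin p) ℝ) {C : ℝ} (hC : 0 ≤ C)
    (h : ∀ u : Fin p → ℝ, (∑ i, u i ^ 2) = 1 → (∑ i, ∑ j, u i * A i j * u j) ≤ C) :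
    lamMax A ≤ C :=
  Real.sSup_le (fun t ⟨u, hu, ht⟩ => ht ▸ h u hu) hC

lemma opNorm_nonneg (A : Matrix (Fin p) (Fin q) ℝ) : 0 ≤ opNorm A :=
  Real.sSup_nonneg fun t ⟨u, _, ht⟩ => ht ▸ Real.sqrt_nonneg _

lemma row_sq_le (A : Matrix (Fin p) (Fin q) ℝ) (u : Fin q → ℝ)
    (hu : (∑ j, u j ^ 2) = 1) :
    (∑ i, (∑ j, A i j * u j) ^ 2) ≤ ∑ i, ∑ j, (A i j) ^ 2 := by
  refine Finset.sum_le_sum fun i _ => ?_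
  calc (∑ j, A i j * u j) ^ 2 ≤ (∑ j, (A i j) ^ 2) * ∑ j, u j ^ 2 :=
        Finset.sum_mul_sq_le_sq_mul_sq _ _ _
    _ = ∑ j, (A i j) ^ 2 := by rw [hu, mul_one]

lemma opNorm_bddAbove (A : Matrix (Fin p) (Fin q) ℝ) :
    BddAbove {t | ∃ u : Fin q → ℝ, (∑ j, u j ^ 2) = 1 ∧
      t = Real.sqrt (∑ i, (∑ j, A i j * u j) ^ 2)} := by
  refine ⟨Real.sqrt (∑ i, ∑ j, (A i j) ^ 2), fun t ⟨u, hu, ht⟩ => ?_⟩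
  rw [ht]
  exact Real.sqrt_le_sqrt (row_sq_le A u hu)

lemma le_opNorm (A : Matrix (Fin p) (Fin q) ℝ) (u : Fin q → ℝ)
    (hu : (∑ j, u j ^ 2) = 1) :
    Real.sqrt (∑ i, (∑ j, A i j * u j) ^ 2) ≤ opNorm A :=
  le_csSup (opNorm_bddAbove A) ⟨u, hu, rfl⟩

lemma mulVec_sq_le_opNorm (A : Matrix (Fin p) (Fin q) ℝ) (v : Fin q → ℝ) :
    (∑ i, (∑ j, A i j * v j) ^ 2) ≤ opNorm A ^ 2 * ∑ j, v j ^ 2 := by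
  rcases eq_or_ne (∑ j, v j ^ 2) 0 with h0 | h0
  · have hv : ∀ j, v j = 0 := by
      intro j
      have := (Finset.sum_eq_zero_iff_of_nonneg
        (fun j _ => sq_nonneg (v j))).1 h0 j (Finset.mem_univ j)
      exact pow_eq_zero_iff (two_ne_zero) |>.1 this
    simp [hv]
  · have hpos : 0 < ∑ j, v j ^ 2 :=
      lt_of_le_of_ne (Finset.sum_nonneg fun j _ => sq_nonneg _) (Ne.symm h0)
    set c := Real.sqrt (∑ j, v j ^ 2) with hc
    have hcpos : 0 < c := Real.sqrt_pos.2 hpos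
    have hc2 : c ^ 2 = ∑ j, v j ^ 2 := Real.sq_sqrt hpos.le
    set u : Fin q → ℝ := fun j => v j / c with hudef
    have hu : (∑ j, u j ^ 2) = 1 := by
      simp only [hudef, div_pow]
      rw [← Finset.sum_div, ← hc2, div_self (by positivity)]
    have hkey : ∀ i, (∑ j, A i j * v j) = c * ∑ j, A i j * u j := by
      intro i
      rw [Finset.mul_sum]
      refine Finset.sum_congr rfl fun j _ => ?_
      simp only [hudef]
      field_simp
    have hval : Real.sqrt (∑ i, (∑ j, A i j * u j) ^ 2) ≤ opNorm A := le_opNorm A u hu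
    have hsq : (∑ i, (∑ j, A i j * u j) ^ 2) ≤ opNorm A ^ 2 := by
      have h1 : 0 ≤ ∑ i, (∑ j, A i j * u j) ^ 2 := Finset.sum_nonneg fun _ _ => sq_nonneg _
      calc (∑ i, (∑ j, A i j * u j) ^ 2) = Real.sqrt (∑ i, (∑ j, A i j * u j) ^ 2) ^ 2 :=
            (Real.sq_sqrt h1).symm
        _ ≤ opNorm A ^ 2 := pow_le_pow_left₀ (Real.sqrt_nonneg _) hval 2
    calc (∑ i, (∑ j, A i j * v j) ^ 2) = c ^ 2 * ∑ i, (∑ j, A i j * u j) ^ 2 := by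
          simp_rw [hkey, mul_pow, ← Finset.mul_sum]
      _ ≤ c ^ 2 * opNorm A ^ 2 := by
          exact mul_le_mul_of_nonneg_left hsq (by positivity)
      _ = opNorm A ^ 2 * ∑ j, v j ^ 2 := by rw [hc2]; ring

lemma sigMin_nonneg (A : Matrix (Fin p) (Fin q) ℝ) : 0 ≤ sigMin A :=
  Real.sInf_nonneg fun t ⟨u, _, ht⟩ => ht ▸ Real.sqrt_nonneg _

lemma sigMin_bddBelow (A : Matrix (Fin p) (Fin q) ℝ) :
    BddBelow {t | ∃ u : Fin q → ℝ, (∑ j, u j ^ 2) = 1 ∧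
      t = Real.sqrt (∑ i, (∑ j, A i j * u j) ^ 2)} :=
  ⟨0, fun t ⟨u, _, ht⟩ => ht ▸ Real.sqrt_nonneg _⟩

lemma sigMin_le (A : Matrix (Fin p) (Fin q) ℝ) (u : Fin q → ℝ)
    (hu : (∑ j, u j ^ 2) = 1) :
    sigMin A ≤ Real.sqrt (∑ i, (∑ j, A i j * u j) ^ 2) :=
  csInf_le (sigMin_bddBelow A) ⟨u, hu, rfl⟩

lemma sigMin_sq_mulVec_le (A : Matrix (Fin p) (Fin q) ℝ) (v : Fin q → ℝ) :
    sigMin A ^ 2 * (∑ j, v j ^ 2) ≤ ∑ i, (∑ j, A i j * v j) ^ 2 := by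
  rcases eq_or_ne (∑ j, v j ^ 2) 0 with h0 | h0
  · rw [h0, mul_zero]
    exact Finset.sum_nonneg fun _ _ => sq_nonneg _
  · have hpos : 0 < ∑ j, v j ^ 2 :=
      lt_of_le_of_ne (Finset.sum_nonneg fun j _ => sq_nonneg _) (Ne.symm h0)
    set c := Real.sqrt (∑ j, v j ^ 2) with hc
    have hcpos : 0 < c := Real.sqrt_pos.2 hpos
    have hc2 : c ^ 2 = ∑ j, v j ^ 2 := Real.sq_sqrt hpos.le
    set u : Fin q → ℝ := fun j => v j / c with hudef
    have hu : (∑ j, u j ^ 2) = 1 := by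
      simp only [hudef, div_pow]
      rw [← Finset.sum_div, ← hc2, div_self (by positivity)]
    have hkey : ∀ i, (∑ j, A i j * v j) = c * ∑ j, A i j * u j := by
      intro i
      rw [Finset.mul_sum]
      refine Finset.sum_congr rfl fun j _ => ?_
      simp only [hudef]
      field_simp
    have hval : sigMin A ≤ Real.sqrt (∑ i, (∑ j, A i j * u j) ^ 2) := sigMin_le A u hu
    have hsq : sigMin A ^ 2 ≤ (∑ i, (∑ j, A i j * u j) ^ 2) := by
      have h1 : 0 ≤ ∑ i, (∑ j, A i j * u j) ^ 2 := Finset.sum_nonneg fun _ _ => sq_nonneg _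
      calc sigMin A ^ 2 ≤ Real.sqrt (∑ i, (∑ j, A i j * u j) ^ 2) ^ 2 :=
            pow_le_pow_left₀ (sigMin_nonneg A) hval 2
        _ = _ := Real.sq_sqrt h1
    calc sigMin A ^ 2 * (∑ j, v j ^ 2)
        ≤ (∑ i, (∑ j, A i j * u j) ^ 2) * (∑ j, v j ^ 2) :=
          mul_le_mul_of_nonneg_right hsq hpos.le
      _ = ∑ i, (∑ j, A i j * v j) ^ 2 := by
          simp_rw [hkey, mul_pow, ← Finset.mul_sum]
          rw [← hc2]; ring

lemma sphere_isCompact (k : ℕ) : IsCompact {u : Fin k → ℝ | (∑ i, u i ^ 2) = 1} := by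
  apply Metric.isCompact_of_isClosed_isBounded
  · exact isClosed_singleton.preimage (by fun_prop)
  · apply (Metric.isBounded_closedBall (x := (0 : Fin k → ℝ)) (r := 1)).subset
    intro u hu
    rw [Metric.mem_closedBall, dist_zero_right,
      pi_norm_le_iff_of_nonneg (by norm_num : (0:ℝ) ≤ 1)]
    intro i
    have h2 : u i ^ 2 ≤ 1 := by
      rw [← hu]
      exact Finset.single_le_sum (fun j _ => sq_nonneg (u j)) (Finset.mem_univ i)
    rw [Real.norm_eq_abs, abs_le]
    constructor <;> nlinarith

lemma sigMin_pos (A : Matrix (Fin p) (Fin q) ℝ) (hq : 0 < q) (hrank : A.rank = q) :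
    0 < sigMin A := by
  set f : (Fin q → ℝ) → ℝ := fun u => Real.sqrt (∑ i, (∑ j, A i j * u j) ^ 2) with hf
  have hfc : Continuous f := by fun_prop
  have hset : {t | ∃ u : Fin q → ℝ, (∑ j, u j ^ 2) = 1 ∧
      t = Real.sqrt (∑ i, (∑ j, A i j * u j) ^ 2)}
      = f '' {u : Fin q → ℝ | (∑ i, u i ^ 2) = 1} := by
    ext t
    constructor
    · rintro ⟨u, hu, rfl⟩; exact ⟨u, hu, rfl⟩
    · rintro ⟨u, hu, rfl⟩; exact ⟨u, hu, rfl⟩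
  have hcpt : IsCompact (f '' {u : Fin q → ℝ | (∑ i, u i ^ 2) = 1}) :=
    (sphere_isCompact q).image hfc
  have hne : (f '' {u : Fin q → ℝ | (∑ i, u i ^ 2) = 1}).Nonempty := by
    obtain ⟨u, hu⟩ := exists_unit hq
    exact ⟨f u, u, hu, rfl⟩
  have hmem : sigMin A ∈ f '' {u : Fin q → ℝ | (∑ i, u i ^ 2) = 1} := by
    rw [sigMin, hset]; exact hcpt.sInf_mem hne
  obtain ⟨u₀, hu₀, hval⟩ := hmem
  rw [← hval, hf]
  apply Real.sqrt_pos.2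
  rcases (Finset.sum_nonneg fun i (_ : i ∈ Finset.univ) =>
      sq_nonneg ((∑ j, A i j * u₀ j))).lt_or_eq with h | h
  · exact h
  · exfalso
    have hz : ∀ i, (∑ j, A i j * u₀ j) = 0 := by
      intro i
      have := (Finset.sum_eq_zero_iff_of_nonneg
        (fun i _ => sq_nonneg ((∑ j, A i j * u₀ j)))).1 h.symm i (Finset.mem_univ i)
      exact pow_eq_zero_iff two_ne_zero |>.1 this
    -- injectivity from rank
    have hker : LinearMap.ker A.mulVecLin = ⊥ := by
      have h1 := LinearMap.finrank_range_add_finrank_ker A.mulVecLin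
      rw [show Module.finrank ℝ (LinearMap.range A.mulVecLin) = q from hrank,
        Module.finrank_pi] at h1
      simp only [Fintype.card_fin] at h1
      have : Module.finrank ℝ (LinearMap.ker A.mulVecLin) = 0 := by omega
      exact Submodule.finrank_eq_zero.1 this
    have hu0 : u₀ = 0 := by
      have : u₀ ∈ LinearMap.ker A.mulVecLin := by
        rw [LinearMap.mem_ker]
        funext i
        simpa [Matrix.mulVecLin_apply, Matrix.mulVec, dotProduct] using hz i
      rw [hker] at this
      simpa using this
    rw [Set.mem_setOf_eq, hu0] at hu₀
    simp at hu₀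

end
section
variable {p q : ℕ}

lemma sigMin_neg (A : Matrix (Fin p) (Fin q) ℝ) : sigMin (-A) = sigMin A := by
  unfold sigMin
  congr 1
  ext t
  have h : ∀ (u : Fin q → ℝ) (i : Fin p), (∑ j, (-A) i j * u j) ^ 2
      = (∑ j, A i j * u j) ^ 2 := by
    intro u i
    simp [Matrix.neg_apply, neg_mul, Finset.sum_neg_distrib]
  simp_rw [Set.mem_setOf_eq, h]

lemma opNorm_neg (A : Matrix (Fin p) (Fin q) ℝ) : opNorm (-A) = opNorm A := by
  unfold opNorm
  congr 1
  ext t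
  have h : ∀ (u : Fin q → ℝ) (i : Fin p), (∑ j, (-A) i j * u j) ^ 2
      = (∑ j, A i j * u j) ^ 2 := by
    intro u i
    simp [Matrix.neg_apply, neg_mul, Finset.sum_neg_distrib]
  simp_rw [Set.mem_setOf_eq, h]

lemma sqrt_triangle {k : ℕ} (a b : Fin k → ℝ) :
    Real.sqrt (∑ i, (a i - b i) ^ 2)
      ≤ Real.sqrt (∑ i, a i ^ 2) + Real.sqrt (∑ i, b i ^ 2) := by
  let A : EuclideanSpace ℝ (Fin k) := WithLp.toLp 2 a
  let B : EuclideanSpace ℝ (Fin k) := WithLp.toLp 2 b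
  have h := norm_sub_le A B
  simp only [EuclideanSpace.norm_eq, Real.norm_eq_abs, sq_abs] at h
  have hAB : ∀ i, (A - B) i = a i - b i := fun i => by simp [A, B]
  simp only [hAB] at h
  exact h

lemma relu_sub (z : ℝ) : max 0 z - max 0 (-z) = z := by
  rcases le_total 0 z with h | h
  · rw [max_eq_right h, max_eq_left (by linarith)]; ring
  · rw [max_eq_left h, max_eq_right (by linarith)]; ring

end

section main
variable {n d m : ℕ}

lemma swap_key (X : Matrix (Fin n) (Fin d) ℝ) (V : Matrix (Fin m) (Fin d) ℝ)
    (u : Fin n → ℝ) (k : Fin m) :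
    (∑ j, V k j * (∑ i, u i * X i j)) = ∑ i, u i * (X * Vᵀ) i k := by
  simp only [mul_apply, transpose_apply, Finset.mul_sum]
  rw [Finset.sum_comm]
  exact Finset.sum_congr rfl fun i _ => Finset.sum_congr rfl fun j _ => by ring

set_option maxHeartbeats 1000000 in
lemma cover (hn : 0 < n) (X : Matrix (Fin n) (Fin d) ℝ)
    (V : Matrix (Fin m) (Fin d) ℝ) :
    sigMin V ^ 2 * lamMax (X * Xᵀ) ≤
        4 * lamMax (reluM (X * Vᵀ) * (reluM (X * Vᵀ))ᵀ) ∨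
    sigMin (-V) ^ 2 * lamMax (X * Xᵀ) ≤
        4 * lamMax (reluM (X * (-V)ᵀ) * (reluM (X * (-V)ᵀ))ᵀ) := by
  set A := X * Vᵀ with hA
  have hnegA : X * (-V)ᵀ = -A := by
    rw [hA, Matrix.transpose_neg, Matrix.mul_neg]
  set Pp := reluM A with hPp
  set Pm := reluM (-A) with hPm
  set Lp := lamMax (Pp * Ppᵀ) with hLp
  set Lm := lamMax (Pm * Pmᵀ) with hLm
  have hLp0 : 0 ≤ Lp := lamMax_gram_nonneg _
  have hLm0 : 0 ≤ Lm := lamMax_gram_nonneg _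
  set a := Real.sqrt Lp with ha
  set b := Real.sqrt Lm with hb
  have ha0 : 0 ≤ a := Real.sqrt_nonneg _
  have hb0 : 0 ≤ b := Real.sqrt_nonneg _
  have ha2 : a ^ 2 = Lp := Real.sq_sqrt hLp0
  have hb2 : b ^ 2 = Lm := Real.sq_sqrt hLm0
  -- key pointwise estimate
  have key : ∀ u : Fin n → ℝ, (∑ i, u i ^ 2) = 1 →
      sigMin V * Real.sqrt (∑ j, (∑ i, u i * X i j) ^ 2) ≤ a + b := by
    intro u hu
    set v : Fin d → ℝ := fun j => ∑ i, u i * X i j with hv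
    set w : Fin m → ℝ := fun k => ∑ i, u i * A i k with hw
    have hw' : ∀ k, (∑ j, V k j * v j) = w k := fun k => swap_key X V u k
    have h1 : sigMin V ^ 2 * (∑ j, v j ^ 2) ≤ ∑ k, w k ^ 2 := by
      have := sigMin_sq_mulVec_le V v
      simp_rw [hw'] at this
      exact this
    have h2 : sigMin V * Real.sqrt (∑ j, v j ^ 2) ≤ Real.sqrt (∑ k, w k ^ 2) := by
      have hs := Real.sqrt_le_sqrt h1
      rwa [Real.sqrt_mul (sq_nonneg _), Real.sqrt_sq (sigMin_nonneg V)] at hs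
    -- w = p - q
    set pp : Fin m → ℝ := fun k => ∑ i, u i * Pp i k with hpp
    set qq : Fin m → ℝ := fun k => ∑ i, u i * Pm i k with hqq
    have hwpq : ∀ k, w k = pp k - qq k := by
      intro k
      rw [hpp, hqq, ← Finset.sum_sub_distrib]
      refine Finset.sum_congr rfl fun i _ => ?_
      have : Pp i k - Pm i k = A i k := by
        simp only [hPp, hPm, reluM, Matrix.map_apply, Matrix.neg_apply]
        exact relu_sub _
      rw [← mul_sub, this]
    have h3 : Real.sqrt (∑ k, w k ^ 2)
        ≤ Real.sqrt (∑ k, pp k ^ 2) + Real.sqrt (∑ k, qq k ^ 2) := by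
      simp_rw [hwpq]
      exact sqrt_triangle pp qq
    have h4 : Real.sqrt (∑ k, pp k ^ 2) ≤ a :=
      Real.sqrt_le_sqrt (le_lamMax_gram Pp u hu)
    have h5 : Real.sqrt (∑ k, qq k ^ 2) ≤ b :=
      Real.sqrt_le_sqrt (le_lamMax_gram Pm u hu)
    calc sigMin V * Real.sqrt (∑ j, v j ^ 2) ≤ Real.sqrt (∑ k, w k ^ 2) := h2
      _ ≤ _ := h3
      _ ≤ a + b := add_le_add h4 h5
  -- conclude σ² lamX ≤ (a+b)²
  have hmain : sigMin V ^ 2 * lamMax (X * Xᵀ) ≤ (a + b) ^ 2 := by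
    rcases (sigMin_nonneg V).lt_or_eq with hσ | hσ
    · have hlam : lamMax (X * Xᵀ) ≤ ((a + b) / sigMin V) ^ 2 := by
        refine lamMax_le _ (by positivity) fun u hu => ?_
        rw [quad_gram X u]
        have hk := key u hu
        have hsq0 : 0 ≤ ∑ j, (∑ i, u i * X i j) ^ 2 :=
          Finset.sum_nonneg fun _ _ => sq_nonneg _
        have : Real.sqrt (∑ j, (∑ i, u i * X i j) ^ 2) ≤ (a + b) / sigMin V := by
          rw [le_div_iff₀ hσ]
          linarith [hk]
        calc (∑ j, (∑ i, u i * X i j) ^ 2)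
            = Real.sqrt (∑ j, (∑ i, u i * X i j) ^ 2) ^ 2 := (Real.sq_sqrt hsq0).symm
          _ ≤ ((a + b) / sigMin V) ^ 2 := pow_le_pow_left₀ (Real.sqrt_nonneg _) this 2
      calc sigMin V ^ 2 * lamMax (X * Xᵀ) ≤ sigMin V ^ 2 * ((a + b) / sigMin V) ^ 2 :=
            mul_le_mul_of_nonneg_left hlam (sq_nonneg _)
        _ = (a + b) ^ 2 := by field_simp
    · rw [← hσ]
      have : (0:ℝ) ≤ lamMax (X * Xᵀ) := lamMax_gram_nonneg X
      nlinarith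
  rcases le_total a b with hab | hab
  · right
    rw [sigMin_neg, hnegA]
    calc sigMin V ^ 2 * lamMax (X * Xᵀ) ≤ (a + b) ^ 2 := hmain
      _ ≤ 4 * b ^ 2 := by nlinarith
      _ = 4 * Lm := by rw [hb2]
  · left
    calc sigMin V ^ 2 * lamMax (X * Xᵀ) ≤ (a + b) ^ 2 := hmain
      _ ≤ 4 * a ^ 2 := by nlinarith
      _ = 4 * Lp := by rw [ha2]

end main

section main2
variable {n d m : ℕ}

lemma lamMax_XXt_pos (X : Matrix (Fin n) (Fin d) ℝ) (hX : X ≠ 0) :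
    0 < lamMax (X * Xᵀ) := by
  have hex : ∃ i j, X i j ≠ 0 := by
    by_contra h
    push_neg at h
    exact hX (by ext i j; simpa using h i j)
  obtain ⟨i0, j0, hij⟩ := hex
  set u : Fin n → ℝ := fun i => if i = i0 then 1 else 0 with hu
  have huu : (∑ i, u i ^ 2) = 1 := by
    have : ∀ i : Fin n, u i ^ 2 = if i = i0 then 1 else 0 := by
      intro i; rw [hu]; by_cases h : i = i0 <;> simp [h]
    rw [Finset.sum_congr rfl fun i _ => this i, Finset.sum_ite_eq']
    simp
  have hval : ∀ j, (∑ i, u i * X i j) = X i0 j := by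
    intro j
    have : ∀ i : Fin n, u i * X i j = if i = i0 then X i j else 0 := by
      intro i; rw [hu]; by_cases h : i = i0 <;> simp [h]
    rw [Finset.sum_congr rfl fun i _ => this i]
    simp [Finset.sum_ite_eq']
  have hpos : 0 < ∑ j, (∑ i, u i * X i j) ^ 2 := by
    simp_rw [hval]
    have h1 : X i0 j0 ^ 2 ≤ ∑ j, X i0 j ^ 2 :=
      Finset.single_le_sum (f := fun j => X i0 j ^ 2)
        (fun j _ => sq_nonneg _) (Finset.mem_univ j0)
    have h2 : 0 < X i0 j0 ^ 2 := by positivity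
    linarith
  exact lt_of_lt_of_le hpos (le_lamMax_gram X u huu)

lemma XXt_trace_nonneg (X : Matrix (Fin n) (Fin d) ℝ) : 0 ≤ (X * Xᵀ).trace := by
  rw [trace_gram]
  positivity

lemma trace_K_le (X : Matrix (Fin n) (Fin d) ℝ) (V : Matrix (Fin m) (Fin d) ℝ) :
    (reluM (X * Vᵀ) * (reluM (X * Vᵀ))ᵀ).trace ≤ opNorm V ^ 2 * (X * Xᵀ).trace := by
  rw [trace_gram, trace_gram]
  calc (∑ i, ∑ k, (reluM (X * Vᵀ)) i k ^ 2)
      ≤ ∑ i, ∑ k, ((X * Vᵀ) i k) ^ 2 := by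
        refine Finset.sum_le_sum fun i _ => Finset.sum_le_sum fun k _ => ?_
        simp only [reluM, Matrix.map_apply]
        rcases le_total 0 ((X * Vᵀ) i k) with h | h
        · rw [max_eq_right h]
        · rw [max_eq_left h]; simpa using sq_nonneg ((X * Vᵀ) i k)
    _ ≤ ∑ i, opNorm V ^ 2 * ∑ j, X i j ^ 2 := by
        refine Finset.sum_le_sum fun i _ => ?_
        have h := mulVec_sq_le_opNorm V (fun j => X i j)
        have heq : ∀ k, (∑ j, V k j * X i j) = (X * Vᵀ) i k := by
          intro k
          simp only [mul_apply, transpose_apply]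
          exact Finset.sum_congr rfl fun j _ => by ring
        simp_rw [heq] at h
        exact h
    _ = opNorm V ^ 2 * ∑ i, ∑ j, X i j ^ 2 := by rw [Finset.mul_sum]

lemma relu_XVt_eq (X : Matrix (Fin n) (Fin d) ℝ) (V : Matrix (Fin m) (Fin d) ℝ) :
    reluM (X * Vᵀ) = (reluM (V * Xᵀ))ᵀ := by
  have h1 : X * Vᵀ = (V * Xᵀ)ᵀ := by
    rw [Matrix.transpose_mul, Matrix.transpose_transpose]
  rw [h1, reluM, reluM, Matrix.transpose_map]

lemma lamMax_zero (hn : 0 < n) : lamMax (0 : Matrix (Fin n) (Fin n) ℝ) ≤ 0 := by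
  refine lamMax_le _ le_rfl fun u hu => ?_
  simp

lemma good_of (hn : 0 < n) (X : Matrix (Fin n) (Fin d) ℝ) (hX : X ≠ 0)
    (V : Matrix (Fin m) (Fin d) ℝ) (hσ : 0 < sigMin V)
    (hL : sigMin V ^ 2 * lamMax (X * Xᵀ) ≤
      4 * lamMax (reluM (X * Vᵀ) * (reluM (X * Vᵀ))ᵀ)) :
    reluM (V * Xᵀ) ≠ 0 ∧
      (reluM (X * Vᵀ) * (reluM (X * Vᵀ))ᵀ).trace /
          lamMax (reluM (X * Vᵀ) * (reluM (X * Vᵀ))ᵀ) ≤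
        4 * (opNorm V ^ 2 / sigMin V ^ 2) * ((X * Xᵀ).trace / lamMax (X * Xᵀ)) := by
  set lamX := lamMax (X * Xᵀ) with hlamX
  set L := lamMax (reluM (X * Vᵀ) * (reluM (X * Vᵀ))ᵀ) with hLdef
  have hlamXpos : 0 < lamX := lamMax_XXt_pos X hX
  have hLlow : sigMin V ^ 2 * lamX / 4 ≤ L := by linarith
  have hLpos : 0 < L := by
    have : 0 < sigMin V ^ 2 * lamX / 4 := by positivity
    linarith
  constructor
  · intro hrel
    have h0 : reluM (X * Vᵀ) = 0 := by rw [relu_XVt_eq X V, hrel, Matrix.transpose_zero]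
    rw [hLdef, h0, Matrix.zero_mul] at hLpos
    exact absurd (lamMax_zero hn) (not_le.2 hLpos)
  · set T := (reluM (X * Vᵀ) * (reluM (X * Vᵀ))ᵀ).trace with hT
    have hTle : T ≤ opNorm V ^ 2 * (X * Xᵀ).trace := trace_K_le X V
    have hTrXnn : 0 ≤ (X * Xᵀ).trace := XXt_trace_nonneg X
    have h1 : T / L ≤ (opNorm V ^ 2 * (X * Xᵀ).trace) / (sigMin V ^ 2 * lamX / 4) :=
      div_le_div₀ (by positivity) hTle (by positivity) hLlow
    have h2 : (opNorm V ^ 2 * (X * Xᵀ).trace) / (sigMin V ^ 2 * lamX / 4)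
        = 4 * (opNorm V ^ 2 / sigMin V ^ 2) * ((X * Xᵀ).trace / lamX) := by
      field_simp
    rw [h2] at h1
    exact h1

end main2

instance matrixBorel {m d : ℕ} : BorelSpace (Matrix (Fin m) (Fin d) ℝ) :=
  ⟨(inferInstance : BorelSpace (Fin m → Fin d → ℝ)).measurable_eq⟩

section meas
variable {n d m : ℕ}

lemma cont_entry {a : Fin m} {b : Fin d} :
    Continuous (fun V : Matrix (Fin m) (Fin d) ℝ => V a b) := by
  have h : Continuous (fun V : Fin m → Fin d → ℝ => V a b) :=
    (continuous_apply b).comp (continuous_apply a)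
  exact h

lemma usc_sigMin (hd : 0 < d) :
    UpperSemicontinuous (fun V : Matrix (Fin m) (Fin d) ℝ => sigMin V) := by
  intro V₀ c hc
  have hne : {t | ∃ u : Fin d → ℝ, (∑ j, u j ^ 2) = 1 ∧
      t = Real.sqrt (∑ i, (∑ j, V₀ i j * u j) ^ 2)}.Nonempty := by
    obtain ⟨u, hu⟩ := exists_unit hd
    exact ⟨_, u, hu, rfl⟩
  obtain ⟨t, ⟨u, hu, ht⟩, htc⟩ := exists_lt_of_csInf_lt hne hc
  have hcont : Continuous (fun V : Matrix (Fin m) (Fin d) ℝ =>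
      Real.sqrt (∑ i, (∑ j, V i j * u j) ^ 2)) := by
    apply Real.continuous_sqrt.comp
    apply continuous_finset_sum
    intro i _
    exact (continuous_finset_sum _ fun j _ => (cont_entry).mul continuous_const).pow 2
  rw [ht] at htc
  have hev := (hcont.tendsto V₀).eventually (eventually_lt_nhds htc)
  exact hev.mono fun V hV => lt_of_le_of_lt (sigMin_le V u hu) hV

lemma lsc_lamK (hn : 0 < n) (X : Matrix (Fin n) (Fin d) ℝ) :
    LowerSemicontinuous (fun V : Matrix (Fin m) (Fin d) ℝ =>
      lamMax (reluM (X * Vᵀ) * (reluM (X * Vᵀ))ᵀ)) := by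
  intro V₀ c hc
  have hne : {t | ∃ u : Fin n → ℝ, (∑ i, u i ^ 2) = 1 ∧
      t = ∑ i, ∑ j, u i * (reluM (X * V₀ᵀ) * (reluM (X * V₀ᵀ))ᵀ) i j * u j}.Nonempty := by
    obtain ⟨u, hu⟩ := exists_unit hn
    exact ⟨_, u, hu, rfl⟩
  obtain ⟨t, ⟨u, hu, ht⟩, hct⟩ := exists_lt_of_lt_csSup hne hc
  rw [ht, quad_gram] at hct
  have hform : ∀ (V : Matrix (Fin m) (Fin d) ℝ) (k : Fin m) (i : Fin n),
      (reluM (X * Vᵀ)) i k = max 0 (∑ j, X i j * V k j) := by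
    intro V k i
    simp [reluM, Matrix.map_apply, mul_apply, transpose_apply]
  have hcont : Continuous (fun V : Matrix (Fin m) (Fin d) ℝ =>
      ∑ k, (∑ i, u i * max 0 (∑ j, X i j * V k j)) ^ 2) := by
    apply continuous_finset_sum
    intro k _
    refine (continuous_finset_sum _ fun i _ => ?_).pow 2
    exact continuous_const.mul (continuous_const.max
      (continuous_finset_sum _ fun j _ => continuous_const.mul cont_entry))
  have hct' : c < ∑ k, (∑ i, u i * max 0 (∑ j, X i j * V₀ k j)) ^ 2 := by
    simp_rw [← hform]
    exact hct
  have hev := (hcont.tendsto V₀).eventually (eventually_gt_nhds hct')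
  refine hev.mono fun V hV => ?_
  have hle : (∑ k, (∑ i, u i * max 0 (∑ j, X i j * V k j)) ^ 2)
      ≤ lamMax (reluM (X * Vᵀ) * (reluM (X * Vᵀ))ᵀ) := by
    have := le_lamMax_gram (reluM (X * Vᵀ)) u hu
    simp_rw [hform V] at this
    exact this
  exact lt_of_lt_of_le hV hle

lemma measurable_S (hn : 0 < n) (hd : 0 < d) (X : Matrix (Fin n) (Fin d) ℝ) :
    MeasurableSet {V : Matrix (Fin m) (Fin d) ℝ | 0 < sigMin V ∧
      sigMin V ^ 2 * lamMax (X * Xᵀ) ≤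
        4 * lamMax (reluM (X * Vᵀ) * (reluM (X * Vᵀ))ᵀ)} := by
  have h1 : Measurable (fun V : Matrix (Fin m) (Fin d) ℝ => sigMin V) :=
    (usc_sigMin hd).measurable
  have h2 : Measurable (fun V : Matrix (Fin m) (Fin d) ℝ =>
      lamMax (reluM (X * Vᵀ) * (reluM (X * Vᵀ))ᵀ)) :=
    (lsc_lamK hn X).measurable
  apply MeasurableSet.inter
  · exact measurableSet_lt measurable_const h1
  · exact measurableSet_le ((h1.pow_const 2).mul_const _) (h2.const_mul 4)

end meas

/-- If `W` and `−W` have the same distribution and `W` is a.s. full rank (with `m ≥ d`),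
then with probability at least `1/2` the effective rank of the outer-layer NTK
`K_outer = φ(XWᵀ)φ(XWᵀ)ᵀ` is at most `4 (‖W‖₂²/σ_min(W)²)` times that of `X Xᵀ`. -/
theorem outer_half_prob_bound
    (n d m : ℕ) (hn : 0 < n)
    (X : Matrix (Fin n) (Fin d) ℝ) (hX : X ≠ 0) (hmd : d ≤ m)
    {Ω : Type} [MeasurableSpace Ω] (P : Measure Ω) [IsProbabilityMeasure P]
    (W : Ω → Matrix (Fin m) (Fin d) ℝ) (hWmeas : Measurable W)
    (hsym : Measure.map W P = Measure.map (fun ω => -W ω) P)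
    (hrank : ∀ᵐ ω ∂P, (W ω).rank = d)
    (Kout : Ω → Matrix (Fin n) (Fin n) ℝ)
    (hKout : ∀ ω, Kout ω = reluM (X * (W ω)ᵀ) * (reluM (X * (W ω)ᵀ))ᵀ) :
    ENNReal.ofReal (1 / 2) ≤
      P {ω | reluM (W ω * Xᵀ) ≠ 0 ∧
        (Kout ω).trace / lamMax (Kout ω) ≤
          4 * (opNorm (W ω) ^ 2 / sigMin (W ω) ^ 2) *
            ((X * Xᵀ).trace / lamMax (X * Xᵀ))} := by
  have hd : 0 < d := by
    rcases Nat.eq_zero_or_pos d with rfl | hd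
    · exact absurd (by ext i j; exact j.elim0) hX
    · exact hd
  set S : Set (Matrix (Fin m) (Fin d) ℝ) := {V | 0 < sigMin V ∧
      sigMin V ^ 2 * lamMax (X * Xᵀ) ≤
        4 * lamMax (reluM (X * Vᵀ) * (reluM (X * Vᵀ))ᵀ)} with hSdeF
  have hSmeas : MeasurableSet S := measurable_S hn hd X
  have hnegmeas : Measurable (fun ω => -W ω) := by
    have h : Measurable (fun M : Fin m → Fin d → ℝ => -M) := measurable_neg
    exact (h.comp hWmeas : _)
  have hcover : ∀ᵐ ω ∂P, ω ∈ W ⁻¹' S ∪ (fun ω => -W ω) ⁻¹' S := by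
    filter_upwards [hrank] with ω hω
    have hσ : 0 < sigMin (W ω) := sigMin_pos (W ω) hd hω
    rcases cover hn X (W ω) with h | h
    · exact Or.inl ⟨hσ, h⟩
    · refine Or.inr ⟨?_, h⟩
      rwa [sigMin_neg]
  have hUc : P ((W ⁻¹' S ∪ (fun ω => -W ω) ⁻¹' S)ᶜ) = 0 := by
    have h := hcover
    rw [ae_iff] at h
    simpa [Set.compl_def] using h
  have hU : (1 : ENNReal) ≤ P (W ⁻¹' S ∪ (fun ω => -W ω) ⁻¹' S) := by
    have h1 : (1 : ENNReal) = P Set.univ := (measure_univ (μ := P)).symm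
    rw [h1, ← Set.union_compl_self (W ⁻¹' S ∪ (fun ω => -W ω) ⁻¹' S)]
    calc P _ ≤ P (W ⁻¹' S ∪ (fun ω => -W ω) ⁻¹' S)
          + P ((W ⁻¹' S ∪ (fun ω => -W ω) ⁻¹' S)ᶜ) := measure_union_le _ _
      _ = P (W ⁻¹' S ∪ (fun ω => -W ω) ⁻¹' S) := by rw [hUc, add_zero]
  have h2 : P ((fun ω => -W ω) ⁻¹' S) = P (W ⁻¹' S) := by
    rw [← Measure.map_apply hnegmeas hSmeas, ← hsym, Measure.map_apply hWmeas hSmeas]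
  have hhalf : ENNReal.ofReal (1 / 2) ≤ P (W ⁻¹' S) := by
    have h1 : (1 : ENNReal) ≤ P (W ⁻¹' S) + P (W ⁻¹' S) := by
      calc (1 : ENNReal) ≤ P (W ⁻¹' S ∪ (fun ω => -W ω) ⁻¹' S) := hU
        _ ≤ P (W ⁻¹' S) + P ((fun ω => -W ω) ⁻¹' S) := measure_union_le _ _
        _ = P (W ⁻¹' S) + P (W ⁻¹' S) := by rw [h2]
    have hoR : ENNReal.ofReal (1 / 2) = 1 / 2 := by
      rw [ENNReal.ofReal_div_of_pos (by norm_num)]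
      norm_num
    rw [hoR, ENNReal.div_le_iff_le_mul (Or.inl (by norm_num)) (Or.inl (by norm_num)),
      mul_two]
    exact h1
  refine le_trans hhalf (measure_mono ?_)
  intro ω hω
  obtain ⟨hσ, hL⟩ := hω
  obtain ⟨hrel, hineq⟩ := good_of hn X hX (W ω) hσ hL
  refine ⟨hrel, ?_⟩
  rw [hKout ω]
  exact hineq
end

section
/- Let d ≥ 2 and let x_1, …, x_n ∈ ℝ^d be nonzero vectors with the matrix X (rows x_i) nonzero. Define the analytical inner-layer NTK matrix K^∞ ∈ ℝ^{n×n} for the ReLU activation by (K^∞)_{ij} = ⟨x_i, x_j⟩ · E_{w∼N(0, I_d)}[1{⟨x_i, w⟩ ≥ 0} · 1{⟨x_j, w⟩ ≥ 0}]. Then (1/4) · Tr(X Xᵀ)/λ_1(X Xᵀ) ≤ Tr(K^∞)/λ_1(K^∞) ≤ 4 · Tr(X Xᵀ)/λ_1(X Xᵀ). -/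
open MeasureTheory ProbabilityTheory Matrix

/-- The standard Gaussian measure `N(0, I_d)` on `ℝ^d`. -/
noncomputable def stdGaussPi (d : ℕ) : Measure (Fin d → ℝ) :=
  Measure.pi fun _ => gaussianReal 0 1

namespace NTKAux

instance (d : ℕ) : IsProbabilityMeasure (stdGaussPi d) := by
  unfold stdGaussPi; infer_instance

lemma meas_lin {d : ℕ} (x : Fin d → ℝ) : Measurable (fun w : Fin d → ℝ => ∑ k, x k * w k) :=
  Finset.measurable_sum _ fun k _ => measurable_const.mul (measurable_pi_apply k)

lemma gaussianReal_singleton (a : ℝ) : gaussianReal 0 1 {a} = 0 := by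
  rw [gaussianReal_of_var_ne_zero _ one_ne_zero]
  exact (withDensity_absolutelyContinuous _ _) (measure_singleton a)

lemma hyperplane_null {d : ℕ} (x : Fin d → ℝ) (hx : x ≠ 0) :
    stdGaussPi d {w | ∑ k, x k * w k = 0} = 0 := by
  obtain ⟨k0, hk0⟩ : ∃ k, x k ≠ 0 := by
    by_contra h; push_neg at h; exact hx (funext h)
  cases d with
  | zero => exact k0.elim0
  | succ m =>
    have hS : MeasurableSet {w : Fin (m+1) → ℝ | ∑ k, x k * w k = 0} :=
      (meas_lin x) (measurableSet_singleton 0)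
    have hmp := (measurePreserving_piFinSuccAbove
      (fun _ : Fin (m+1) => gaussianReal 0 1) k0).symm
    have key : stdGaussPi (m+1) {w | ∑ k, x k * w k = 0}
        = ((gaussianReal 0 1).prod (Measure.pi fun _ : Fin m => gaussianReal 0 1))
          ((MeasurableEquiv.piFinSuccAbove (fun _ : Fin (m+1) => ℝ) k0).symm ⁻¹'
            {w | ∑ k, x k * w k = 0}) := by
      rw [hmp.measure_preimage hS.nullMeasurableSet]
      rfl
    rw [key, Measure.prod_apply_symm
      ((MeasurableEquiv.piFinSuccAbove (fun _ : Fin (m+1) => ℝ) k0).symm.measurable hS)]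
    have hslice : ∀ y : Fin m → ℝ,
        ((fun t : ℝ => (t, y)) ⁻¹'
          ((MeasurableEquiv.piFinSuccAbove (fun _ : Fin (m+1) => ℝ) k0).symm ⁻¹'
            {w | ∑ k, x k * w k = 0}))
        = {(-(∑ j, x (k0.succAbove j) * y j)) / x k0} := by
      intro y
      ext t
      simp only [Set.mem_preimage, Set.mem_setOf_eq, MeasurableEquiv.piFinSuccAbove_symm_apply,
        Fin.insertNthEquiv_apply, Set.mem_singleton_iff]
      rw [Fin.sum_univ_succAbove
        (fun k : Fin (m+1) => x k * (Fin.insertNth k0 t y : Fin (m+1) → ℝ) k) k0]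
      simp only [Fin.insertNth_apply_same, Fin.insertNth_apply_succAbove]
      rw [eq_div_iff hk0]
      constructor
      · intro h; nlinarith
      · intro h; nlinarith
    simp only [hslice, gaussianReal_singleton]
    simp

lemma gauss_neg : (gaussianReal 0 1).map (fun t : ℝ => -t) = gaussianReal 0 1 := by
  have h := gaussianReal_map_const_mul (μ := 0) (v := 1) (-1)
  simp only [neg_one_mul, mul_zero] at h
  convert h using 2
  ext : 1
  simp

lemma stdGaussPi_neg (d : ℕ) :
    (stdGaussPi d).map (fun w : Fin d → ℝ => -w) = stdGaussPi d := by
  have h1 : MeasurePreserving (fun t : ℝ => -t) (gaussianReal 0 1) (gaussianReal 0 1) :=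
    ⟨measurable_neg, gauss_neg⟩
  exact (measurePreserving_pi _ _ fun _ : Fin d => h1).map_eq

lemma halfspace_half {d : ℕ} (x : Fin d → ℝ) (hx : x ≠ 0) :
    stdGaussPi d {w | 0 ≤ ∑ k, x k * w k} = 1/2 := by
  set μ := stdGaussPi d
  set A : Set (Fin d → ℝ) := {w | 0 ≤ ∑ k, x k * w k} with hAdef
  set B : Set (Fin d → ℝ) := {w | ∑ k, x k * w k ≤ 0} with hBdef
  have hA : MeasurableSet A := measurableSet_le measurable_const (meas_lin x)
  have hB : MeasurableSet B := measurableSet_le (meas_lin x) measurable_const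
  have hAB : μ A = μ B := by
    conv_lhs => rw [show μ = μ.map (fun w : Fin d → ℝ => -w) from (stdGaussPi_neg d).symm]
    rw [Measure.map_apply measurable_neg hA]
    congr 1
    ext w
    simp only [Set.mem_preimage, hAdef, hBdef, Set.mem_setOf_eq, Pi.neg_apply, mul_neg,
      Finset.sum_neg_distrib, le_neg, neg_zero]
  have hU : A ∪ B = Set.univ := by
    ext w; simp [hAdef, hBdef, le_total (0 : ℝ) (∑ k, x k * w k), Set.mem_union]
  have hI : μ (A ∩ B) = 0 := by
    have : A ∩ B = {w | ∑ k, x k * w k = 0} := by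
      ext w; simp only [Set.mem_inter_iff, hAdef, hBdef, Set.mem_setOf_eq]
      constructor
      · rintro ⟨h1, h2⟩; linarith
      · intro h; exact ⟨h.ge, h.le⟩
    rw [this]; exact hyperplane_null x hx
  have hsum : μ A + μ B = 1 := by
    have := measure_union_add_inter (μ := μ) A hB
    rw [hU, hI, add_zero, measure_univ] at this
    exact this.symm
  rw [← hAB, ← two_mul] at hsum
  rw [show μ A = 1 / 2 from ?_]
  rwa [ENNReal.eq_div_iff two_ne_zero (by norm_num)]

/- ## Rayleigh quotient toolkit -/

lemma raySet_bddAbove {n : ℕ} (A : Matrix (Fin n) (Fin n) ℝ) :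
    BddAbove {t | ∃ u : Fin n → ℝ, (∑ i, u i ^ 2) = 1 ∧ t = ∑ i, ∑ j, u i * A i j * u j} := by
  refine ⟨∑ i, ∑ j, |A i j|, ?_⟩
  rintro t ⟨u, hu, rfl⟩
  have habs : ∀ i, |u i| ≤ 1 := by
    intro i
    have h1 : u i ^ 2 ≤ 1 := by
      rw [← hu]
      exact Finset.single_le_sum (f := fun j => u j ^ 2) (fun j _ => sq_nonneg _)
        (Finset.mem_univ i)
    nlinarith [abs_nonneg (u i), sq_abs (u i)]
  refine Finset.sum_le_sum fun i _ => Finset.sum_le_sum fun j _ => ?_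
  calc u i * A i j * u j ≤ |u i * A i j * u j| := le_abs_self _
    _ = |u i| * |A i j| * |u j| := by rw [abs_mul, abs_mul]
    _ ≤ 1 * |A i j| * 1 :=
        mul_le_mul (mul_le_mul_of_nonneg_right (habs i) (abs_nonneg _)) (habs j)
          (abs_nonneg _) (by positivity)
    _ = |A i j| := by ring

lemma unit_basis_sum {n : ℕ} (i0 : Fin n) :
    (∑ i, (if i = i0 then (1:ℝ) else 0) ^ 2) = 1 := by
  simp [apply_ite (· ^ (2:ℕ))]

lemma le_lamMax {n : ℕ} (A : Matrix (Fin n) (Fin n) ℝ) (u : Fin n → ℝ)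
    (hu : (∑ i, u i ^ 2) = 1) : (∑ i, ∑ j, u i * A i j * u j) ≤ lamMax A :=
  le_csSup (raySet_bddAbove A) ⟨u, hu, rfl⟩

lemma lamMax_le {n : ℕ} (hn : 0 < n) (A : Matrix (Fin n) (Fin n) ℝ) (c : ℝ)
    (h : ∀ u : Fin n → ℝ, (∑ i, u i ^ 2) = 1 → (∑ i, ∑ j, u i * A i j * u j) ≤ c) :
    lamMax A ≤ c := by
  apply csSup_le
  · exact ⟨_, ⟨fun i => if i = ⟨0, hn⟩ then 1 else 0, unit_basis_sum _, rfl⟩⟩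
  · rintro t ⟨u, hu, rfl⟩; exact h u hu

lemma quadForm_basis {n : ℕ} (A : Matrix (Fin n) (Fin n) ℝ) (i0 : Fin n) :
    (∑ i, ∑ j, (if i = i0 then (1:ℝ) else 0) * A i j * (if j = i0 then (1:ℝ) else 0))
      = A i0 i0 := by
  rw [Finset.sum_eq_single i0]
  · rw [Finset.sum_eq_single i0]
    · simp
    · intro j _ hj; simp [hj]
    · intro h; exact absurd (Finset.mem_univ i0) h
  · intro i _ hi; simp [hi]
  · intro h; exact absurd (Finset.mem_univ i0) h

lemma diag_le_lamMax {n : ℕ} (A : Matrix (Fin n) (Fin n) ℝ) (i0 : Fin n) :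
    A i0 i0 ≤ lamMax A := by
  have := le_lamMax A (fun i => if i = i0 then (1:ℝ) else 0) (unit_basis_sum i0)
  rwa [quadForm_basis] at this

lemma quadForm_le {n : ℕ} (A : Matrix (Fin n) (Fin n) ℝ) (v : Fin n → ℝ) :
    (∑ i, ∑ j, v i * A i j * v j) ≤ lamMax A * ∑ i, v i ^ 2 := by
  rcases eq_or_ne (∑ i, v i ^ 2) 0 with h0 | h0
  · have hv : ∀ i, v i = 0 := by
      intro i
      have := (Finset.sum_eq_zero_iff_of_nonneg (fun j _ => sq_nonneg (v j))).mp h0 i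
        (Finset.mem_univ i)
      exact pow_eq_zero_iff two_ne_zero |>.mp this
    simp [hv, h0]
  · have hpos : 0 < ∑ i, v i ^ 2 :=
      lt_of_le_of_ne (Finset.sum_nonneg fun _ _ => sq_nonneg _) (Ne.symm h0)
    set r := Real.sqrt (∑ i, v i ^ 2) with hrdef
    have hr : 0 < r := Real.sqrt_pos.mpr hpos
    have hr2 : r ^ 2 = ∑ i, v i ^ 2 := Real.sq_sqrt hpos.le
    have hu : (∑ i, (v i / r) ^ 2) = 1 := by
      simp only [div_pow, hr2]
      rw [← Finset.sum_div, div_self h0]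
    have hle := le_lamMax A (fun i => v i / r) (by simpa using hu)
    have hq : (∑ i, ∑ j, (v i / r) * A i j * (v j / r))
        = (∑ i, ∑ j, v i * A i j * v j) / r ^ 2 := by
      rw [Finset.sum_div]
      refine Finset.sum_congr rfl fun i _ => ?_
      rw [Finset.sum_div]
      refine Finset.sum_congr rfl fun j _ => ?_
      rw [div_mul_eq_mul_div, div_mul_div_comm, ← pow_two]
    rw [show (∑ i, ∑ j, (fun i => v i / r) i * A i j * (fun i => v i / r) j)
        = ∑ i, ∑ j, (v i / r) * A i j * (v j / r) from rfl, hq,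
      div_le_iff₀ (by positivity)] at hle
    rw [← hr2]
    linarith

lemma quad_gram_nonneg {n d : ℕ} (x : Fin n → Fin d → ℝ) (v : Fin n → ℝ) :
    0 ≤ ∑ i, ∑ j, v i * (∑ k, x i k * x j k) * v j := by
  have key : ∑ i, ∑ j, v i * (∑ k, x i k * x j k) * v j
      = ∑ k, (∑ i, v i * x i k) ^ 2 := by
    calc ∑ i, ∑ j, v i * (∑ k, x i k * x j k) * v j
        = ∑ i, ∑ j, ∑ k, v i * x i k * (v j * x j k) := by
          refine Finset.sum_congr rfl fun i _ => Finset.sum_congr rfl fun j _ => ?_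
          rw [Finset.mul_sum, Finset.sum_mul]
          exact Finset.sum_congr rfl fun k _ => by ring
      _ = ∑ i, ∑ k, ∑ j, v i * x i k * (v j * x j k) :=
          Finset.sum_congr rfl fun i _ => Finset.sum_comm
      _ = ∑ k, ∑ i, ∑ j, v i * x i k * (v j * x j k) := Finset.sum_comm
      _ = ∑ k, (∑ i, v i * x i k) ^ 2 := by
          refine Finset.sum_congr rfl fun k _ => ?_
          rw [pow_two, Finset.sum_mul_sum]
  rw [key]
  positivity

/- ## Indicator integrals -/

noncomputable def chi {n d : ℕ} (x : Fin n → Fin d → ℝ) (i : Fin n) (w : Fin d → ℝ) : ℝ :=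
  if 0 ≤ ∑ k, x i k * w k then 1 else 0

lemma chi_mul_self {n d : ℕ} (x : Fin n → Fin d → ℝ) (i : Fin n) (w : Fin d → ℝ) :
    chi x i w * chi x i w = chi x i w := by
  unfold chi; by_cases h : 0 ≤ ∑ k, x i k * w k <;> simp [h]

lemma chi_sq {n d : ℕ} (x : Fin n → Fin d → ℝ) (i : Fin n) (w : Fin d → ℝ) :
    chi x i w ^ 2 = chi x i w := by
  rw [pow_two, chi_mul_self]

def Sset {n d : ℕ} (x : Fin n → Fin d → ℝ) (i : Fin n) : Set (Fin d → ℝ) :=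
  {w | 0 ≤ ∑ k, x i k * w k}

lemma Sset_meas {n d : ℕ} (x : Fin n → Fin d → ℝ) (i : Fin n) :
    MeasurableSet (Sset x i) :=
  measurableSet_le measurable_const (meas_lin _)

lemma chi_eq_indicator {n d : ℕ} (x : Fin n → Fin d → ℝ) (i j : Fin n) :
    (fun w => chi x i w * chi x j w)
      = (Sset x i ∩ Sset x j).indicator (fun _ => (1:ℝ)) := by
  funext w
  by_cases hi : 0 ≤ ∑ k, x i k * w k <;> by_cases hj : 0 ≤ ∑ k, x j k * w k <;>
    simp [chi, Sset, Set.indicator_apply, hi, hj]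

lemma integrable_pair {n d : ℕ} (x : Fin n → Fin d → ℝ) (i j : Fin n) :
    Integrable (fun w => chi x i w * chi x j w) (stdGaussPi d) := by
  rw [chi_eq_indicator]
  exact (integrable_const 1).indicator ((Sset_meas x i).inter (Sset_meas x j))

lemma integrable_single {n d : ℕ} (x : Fin n → Fin d → ℝ) (i : Fin n) :
    Integrable (fun w => chi x i w) (stdGaussPi d) := by
  have : (fun w => chi x i w) = fun w => chi x i w * chi x i w :=
    funext fun w => (chi_mul_self x i w).symm
  rw [this]; exact integrable_pair x i i

lemma integral_single {n d : ℕ} (x : Fin n → Fin d → ℝ) (i : Fin n) (hxi : x i ≠ 0) :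
    ∫ w, chi x i w ∂(stdGaussPi d) = 1/2 := by
  have h1 : (fun w => chi x i w) = fun w => chi x i w * chi x i w :=
    funext fun w => (chi_mul_self x i w).symm
  rw [h1, chi_eq_indicator, Set.inter_self,
    show (Sset x i).indicator (fun _ => (1:ℝ)) = (Sset x i).indicator 1 from rfl,
    integral_indicator_one (Sset_meas x i)]
  rw [show Sset x i = {w | 0 ≤ ∑ k, x i k * w k} from rfl, measureReal_def, halfspace_half (x i) hxi]
  simp [ENNReal.toReal_div]

lemma integral_double_sum_of {n d : ℕ} (g : Fin n → Fin n → (Fin d → ℝ) → ℝ)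
    (hint : ∀ i j, Integrable (g i j) (stdGaussPi d)) (b : Fin n → Fin n → ℝ) :
    ∫ w, ∑ i, ∑ j, b i j * g i j w ∂(stdGaussPi d)
      = ∑ i, ∑ j, b i j * ∫ w, g i j w ∂(stdGaussPi d) := by
  rw [integral_finset_sum _ fun i _ =>
    integrable_finset_sum _ fun j _ => (hint i j).const_mul _]
  refine Finset.sum_congr rfl fun i _ => ?_
  rw [integral_finset_sum _ fun j _ => (hint i j).const_mul _]
  exact Finset.sum_congr rfl fun j _ => integral_const_mul _ _

lemma integrable_double_sum_of {n d : ℕ} (g : Fin n → Fin n → (Fin d → ℝ) → ℝ)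
    (hint : ∀ i j, Integrable (g i j) (stdGaussPi d)) (b : Fin n → Fin n → ℝ) :
    Integrable (fun w => ∑ i, ∑ j, b i j * g i j w) (stdGaussPi d) :=
  integrable_finset_sum _ fun i _ =>
    integrable_finset_sum _ fun j _ => (hint i j).const_mul _

lemma integrable_fpair {n d : ℕ} (x : Fin n → Fin d → ℝ) (i j : Fin n) :
    Integrable (fun w => (chi x i w - 1/2) * (chi x j w - 1/2)) (stdGaussPi d) := by
  have h : (fun w => (chi x i w - 1/2) * (chi x j w - 1/2))
      = fun w => (chi x i w * chi x j w - (1/2) * chi x i w)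
          - ((1/2) * chi x j w - (1/4 : ℝ)) := by
    funext w; ring
  rw [h]
  exact ((integrable_pair x i j).sub ((integrable_single x i).const_mul _)).sub
    (((integrable_single x j).const_mul _).sub (integrable_const _))

lemma integral_fpair {n d : ℕ} (x : Fin n → Fin d → ℝ) (i j : Fin n)
    (hxi : x i ≠ 0) (hxj : x j ≠ 0) :
    ∫ w, (chi x i w - 1/2) * (chi x j w - 1/2) ∂(stdGaussPi d)
      = (∫ w, chi x i w * chi x j w ∂(stdGaussPi d)) - 1/4 := by
  have h : (fun w => (chi x i w - 1/2) * (chi x j w - 1/2))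
      = fun w => (chi x i w * chi x j w - (1/2) * chi x i w)
          - ((1/2) * chi x j w - (1/4 : ℝ)) := by
    funext w; ring
  rw [h, integral_sub
      (f := fun w => chi x i w * chi x j w - (1/2) * chi x i w)
      (g := fun w => (1/2) * chi x j w - (1/4 : ℝ))
      (by exact (integrable_pair x i j).sub ((integrable_single x i).const_mul _))
      (by exact ((integrable_single x j).const_mul _).sub (integrable_const _)),
    integral_sub
      (f := fun w => chi x i w * chi x j w) (g := fun w => (1/2) * chi x i w)
      (integrable_pair x i j) ((integrable_single x i).const_mul _),
    integral_sub
      (f := fun w => (1/2) * chi x j w) (g := fun _ => (1/4 : ℝ))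
      ((integrable_single x j).const_mul _) (integrable_const _),
    integral_const_mul, integral_const_mul, integral_single x i hxi,
    integral_single x j hxj, integral_const]
  simp [measure_univ]
  ring

end NTKAux

open NTKAux

/-- The effective rank of the analytical (infinite-width) inner-layer ReLU NTK
`(K^∞)_{ij} = ⟨x_i, x_j⟩ E_{w∼N(0,I_d)}[1{⟨x_i,w⟩≥0} 1{⟨x_j,w⟩≥0}]` is within a factor 4
of the effective rank of the data Gram matrix `X Xᵀ`. -/
theorem analytical_ntk_effective_rank
    (n d : ℕ) (hn : 0 < n) (hd : 2 ≤ d)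
    (x : Fin n → Fin d → ℝ) (hx : ∀ i, x i ≠ 0)
    (X : Matrix (Fin n) (Fin d) ℝ) (hX : X = Matrix.of fun i j => x i j) (hXne : X ≠ 0)
    (Kinf : Matrix (Fin n) (Fin n) ℝ)
    (hKinf : ∀ i j, Kinf i j = (∑ k, x i k * x j k) *
      ∫ w : Fin d → ℝ, (if 0 ≤ ∑ k, x i k * w k then (1 : ℝ) else 0) *
        (if 0 ≤ ∑ k, x j k * w k then (1 : ℝ) else 0) ∂(stdGaussPi d)) :
    (1 / 4) * ((X * Xᵀ).trace / lamMax (X * Xᵀ)) ≤ Kinf.trace / lamMax Kinf ∧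
    Kinf.trace / lamMax Kinf ≤ 4 * ((X * Xᵀ).trace / lamMax (X * Xᵀ)) := by
  subst hX
  set X : Matrix (Fin n) (Fin d) ℝ := Matrix.of fun i j => x i j with hXdef
  -- Gram matrix entries
  have hAij : ∀ i j, (X * Xᵀ) i j = ∑ k, x i k * x j k := by
    intro i j; simp [Matrix.mul_apply, hXdef]
  -- c i j := correlation integrals
  set c : Fin n → Fin n → ℝ :=
    fun i j => ∫ w, chi x i w * chi x j w ∂(stdGaussPi d) with hcdef
  have hK : ∀ i j, Kinf i j = (X * Xᵀ) i j * c i j := by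
    intro i j
    rw [hKinf i j, hAij i j]
    rfl
  have hcii : ∀ i, c i i = 1/2 := by
    intro i
    have : c i i = ∫ w, chi x i w ∂(stdGaussPi d) := by
      rw [hcdef]
      exact integral_congr_ae (Filter.Eventually.of_forall fun w => chi_mul_self x i w)
    rw [this, integral_single x i (hx i)]
  -- trace identities
  have htrG : (X * Xᵀ).trace = ∑ i, ∑ k, x i k * x i k := by
    rw [Matrix.trace]
    exact Finset.sum_congr rfl fun i _ => by rw [Matrix.diag_apply, hAij]
  have htrK : Kinf.trace = (1/2) * (X * Xᵀ).trace := by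
    rw [Matrix.trace, Matrix.trace, Finset.mul_sum]
    refine Finset.sum_congr rfl fun i _ => ?_
    rw [Matrix.diag_apply, Matrix.diag_apply, hK, hcii]
    ring
  -- positivity
  have hxsq : ∀ i, 0 < ∑ k, x i k * x i k := by
    intro i
    obtain ⟨k, hk⟩ : ∃ k, x i k ≠ 0 := by
      by_contra h; push_neg at h; exact hx i (funext h)
    exact Finset.sum_pos' (fun j _ => mul_self_nonneg _)
      ⟨k, Finset.mem_univ k, mul_self_pos.mpr hk⟩
  have i0 : Fin n := ⟨0, hn⟩
  have hTpos : 0 < (X * Xᵀ).trace := by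
    rw [htrG]
    exact Finset.sum_pos (fun i _ => hxsq i) ⟨i0, Finset.mem_univ i0⟩
  have hlamG : 0 < lamMax (X * Xᵀ) := by
    refine lt_of_lt_of_le ?_ (diag_le_lamMax _ i0)
    rw [hAij]
    exact hxsq i0
  have hlamK : 0 < lamMax Kinf := by
    refine lt_of_lt_of_le ?_ (diag_le_lamMax Kinf i0)
    rw [hK, hcii, hAij]
    have := hxsq i0
    linarith [mul_pos this (by norm_num : (0:ℝ) < 1/2)]
  -- upper bound on lamMax Kinf
  have hKup : lamMax Kinf ≤ (1/2) * lamMax (X * Xᵀ) := by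
    refine lamMax_le hn _ _ fun u hu => ?_
    have step1 : (∑ i, ∑ j, u i * Kinf i j * u j)
        = ∑ i, ∑ j, (u i * (X * Xᵀ) i j * u j) * c i j := by
      refine Finset.sum_congr rfl fun i _ => Finset.sum_congr rfl fun j _ => ?_
      rw [hK]; ring
    have step2 : (∑ i, ∑ j, (u i * (X * Xᵀ) i j * u j) * c i j)
        = ∫ w, ∑ i, ∑ j, (u i * (X * Xᵀ) i j * u j) * (chi x i w * chi x j w)
            ∂(stdGaussPi d) := by
      rw [integral_double_sum_of _ (fun i j => integrable_pair x i j)]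
    have hpt : ∀ w, (∑ i, ∑ j, (u i * (X * Xᵀ) i j * u j) * (chi x i w * chi x j w))
        ≤ lamMax (X * Xᵀ) * ∑ i, u i ^ 2 * chi x i w := by
      intro w
      have h1 : (∑ i, ∑ j, (u i * (X * Xᵀ) i j * u j) * (chi x i w * chi x j w))
          = ∑ i, ∑ j, (u i * chi x i w) * (X * Xᵀ) i j * (u j * chi x j w) := by
        refine Finset.sum_congr rfl fun i _ => Finset.sum_congr rfl fun j _ => by ring
      have h2 := quadForm_le (X * Xᵀ) (fun i => u i * chi x i w)
      rw [h1]
      refine le_trans h2 ?_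
      have h3 : (∑ i, (u i * chi x i w) ^ 2) = ∑ i, u i ^ 2 * chi x i w := by
        refine Finset.sum_congr rfl fun i _ => ?_
        rw [mul_pow, chi_sq]
      rw [h3]
    have hint1 : Integrable
        (fun w => ∑ i, ∑ j, (u i * (X * Xᵀ) i j * u j) * (chi x i w * chi x j w))
        (stdGaussPi d) :=
      integrable_double_sum_of _ (fun i j => integrable_pair x i j) _
    have hint2 : Integrable
        (fun w => lamMax (X * Xᵀ) * ∑ i, u i ^ 2 * chi x i w) (stdGaussPi d) :=
      (integrable_finset_sum _ fun i _ => (integrable_single x i).const_mul _).const_mul _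
    have hmono := integral_mono hint1 hint2 hpt
    have hrhs : ∫ w, lamMax (X * Xᵀ) * ∑ i, u i ^ 2 * chi x i w ∂(stdGaussPi d)
        = (1/2) * lamMax (X * Xᵀ) := by
      rw [integral_const_mul,
        integral_finset_sum _ fun i _ => (integrable_single x i).const_mul _]
      have : ∀ i : Fin n, i ∈ Finset.univ →
          (∫ w, u i ^ 2 * chi x i w ∂(stdGaussPi d)) = u i ^ 2 * (1/2) := by
        intro i _
        rw [integral_const_mul, integral_single x i (hx i)]
      rw [Finset.sum_congr rfl this, ← Finset.sum_mul, hu]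
      ring
    rw [step1, step2]
    rw [hrhs] at hmono
    exact hmono
  -- lower bound : lamMax G ≤ 4 lamMax Kinf
  have hKlow : lamMax (X * Xᵀ) ≤ 4 * lamMax Kinf := by
    refine lamMax_le hn _ _ fun u hu => ?_
    have key : 0 ≤ (∑ i, ∑ j, u i * Kinf i j * u j)
        - (1/4) * ∑ i, ∑ j, u i * (X * Xᵀ) i j * u j := by
      have hint := integral_double_sum_of
        (fun i j w => (chi x i w - 1/2) * (chi x j w - 1/2))
        (fun i j => integrable_fpair x i j)
        (fun i j => u i * (X * Xᵀ) i j * u j)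
      have hnonneg : 0 ≤ ∫ w, ∑ i, ∑ j, (u i * (X * Xᵀ) i j * u j) *
          ((chi x i w - 1/2) * (chi x j w - 1/2)) ∂(stdGaussPi d) := by
        refine integral_nonneg fun w => ?_
        have h1 : (∑ i, ∑ j, (u i * (X * Xᵀ) i j * u j) *
            ((chi x i w - 1/2) * (chi x j w - 1/2)))
            = ∑ i, ∑ j, (u i * (chi x i w - 1/2)) * (∑ k, x i k * x j k) *
              (u j * (chi x j w - 1/2)) := by
          refine Finset.sum_congr rfl fun i _ => Finset.sum_congr rfl fun j _ => ?_
          rw [hAij]; ring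
        rw [h1]
        exact quad_gram_nonneg x _
      rw [hint] at hnonneg
      have heq : (∑ i, ∑ j, (u i * (X * Xᵀ) i j * u j) *
          ∫ w, (chi x i w - 1/2) * (chi x j w - 1/2) ∂(stdGaussPi d))
          = (∑ i, ∑ j, u i * Kinf i j * u j)
            - (1/4) * ∑ i, ∑ j, u i * (X * Xᵀ) i j * u j := by
        rw [Finset.mul_sum, ← Finset.sum_sub_distrib]
        refine Finset.sum_congr rfl fun i _ => ?_
        rw [Finset.mul_sum, ← Finset.sum_sub_distrib]
        refine Finset.sum_congr rfl fun j _ => ?_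
        rw [integral_fpair x i j (hx i) (hx j), hK]
        have hcij : (∫ w, chi x i w * chi x j w ∂(stdGaussPi d)) = c i j := rfl
        rw [hcij]
        ring
      rwa [heq] at hnonneg
    have hle := le_lamMax Kinf u hu
    linarith
  -- final arithmetic
  set T := (X * Xᵀ).trace
  set a := lamMax Kinf
  set b := lamMax (X * Xᵀ)
  rw [htrK]
  constructor
  · have g1 : T / (4 * b) ≤ T / (2 * a) := by
      rw [div_le_div_iff₀ (by positivity) (by positivity)]
      nlinarith
    calc (1/4) * (T / b) = T / (4 * b) := by ring
      _ ≤ T / (2 * a) := g1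
      _ = (1/2) * T / a := by ring
  · have g2 : T / (2 * a) ≤ 4 * T / b := by
      rw [div_le_div_iff₀ (by positivity) (by positivity)]
      nlinarith
    calc (1/2) * T / a = T / (2 * a) := by ring
      _ ≤ 4 * T / b := g2
      _ = 4 * (T / b) := by ring
end

section
/- Let d ≥ 2 and θ(t) = Σ_{p=0}^∞ c_p t^p with nonnegative coefficients c_p ≥ 0 satisfying Σ_p c_p < ∞. For each integer k ≥ 0 define λ̄_k := Vol(S^{d−1}) ∫_{−1}^{1} θ(t) P_{k,d}(t) (1−t²)^{(d−2)/2} dt, where Vol(S^{d−1}) = 2π^{d/2}/Γ(d/2) and P_{k,d}(t) = ((−1)^k/2^k) · (Γ(d/2)/Γ(k + d/2)) · (1−t²)^{−(d−2)/2} · (d^k/dt^k)(1−t²)^{k+(d−2)/2} is the Gegenbauer polynomial. Then λ̄_k = (π^{d/2}/2^{k−1}) · Σ_{p ≥ k, p−k even} c_p · Γ(p+1) Γ((p−k+1)/2) / (Γ(p−k+1) Γ((p−k+1)/2 + k + d/2)). -/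
open MeasureTheory Real

lemma realBeta {a b : ℝ} (ha : 0 < a) (hb : 0 < b) :
    (∫ x in (0:ℝ)..1, x ^ (a - 1) * (1 - x) ^ (b - 1)) =
      Real.Gamma a * Real.Gamma b / Real.Gamma (a + b) := by
  have h := Complex.Gamma_mul_Gamma_eq_betaIntegral (s := (a:ℂ)) (t := (b:ℂ))
    (by simpa using ha) (by simpa using hb)
  have hbeta : Complex.betaIntegral (a:ℂ) (b:ℂ) =
      ((∫ x in (0:ℝ)..1, x ^ (a-1) * (1-x) ^ (b-1) : ℝ) : ℂ) := by
    rw [Complex.betaIntegral, ← intervalIntegral.integral_ofReal]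
    refine intervalIntegral.integral_congr fun x hx => ?_
    rw [Set.uIcc_of_le (by norm_num : (0:ℝ) ≤ 1), Set.mem_Icc] at hx
    push_cast
    rw [Complex.ofReal_cpow hx.1 (a-1), Complex.ofReal_cpow (by linarith [hx.2]) (b-1)]
    push_cast; ring
  rw [hbeta, ← Complex.ofReal_add, Complex.Gamma_ofReal, Complex.Gamma_ofReal,
    Complex.Gamma_ofReal, ← Complex.ofReal_mul, ← Complex.ofReal_mul] at h
  have h2 := Complex.ofReal_inj.mp h
  have h3 : Real.Gamma (a+b) ≠ 0 := (Real.Gamma_pos_of_pos (by linarith)).ne'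
  field_simp [h3] at h2 ⊢
  linarith [h2]

lemma contWeight {b : ℝ} (hb : 0 ≤ b) : Continuous fun t : ℝ => (1 - t^2) ^ b := by
  rcases eq_or_lt_of_le hb with h | h
  · simp only [← h, Real.rpow_zero]; exact continuous_const
  · rw [continuous_iff_continuousAt]
    intro x
    exact (Real.continuousAt_rpow_const _ _ (Or.inr h.le)).comp
      (by fun_prop : ContinuousAt (fun t : ℝ => 1 - t^2) x)

lemma moment_odd (n : ℕ) (hn : Odd n) (b : ℝ) :
    (∫ t in (-1:ℝ)..1, t ^ n * (1 - t^2) ^ b) = 0 := by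
  have h := intervalIntegral.integral_comp_neg (a := (-1:ℝ)) (b := 1)
    (fun t => t ^ n * (1 - t^2) ^ b)
  simp only [neg_neg, hn.neg_pow, neg_sq] at h
  have : (∫ t in (-1:ℝ)..1, -(t ^ n * (1 - t^2) ^ b)) = ∫ t in (-1:ℝ)..1, t ^ n * (1-t^2) ^ b := by
    rw [← h]; congr 1; funext t; ring
  rw [intervalIntegral.integral_neg] at this
  linarith

lemma sq_image_Ioo : (fun t : ℝ => t ^ 2) '' Set.Ioo 0 1 = Set.Ioo 0 1 := by
  ext u
  constructor
  · rintro ⟨t, ⟨ht0, ht1⟩, rfl⟩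
    exact ⟨by positivity, by show t ^ 2 < 1; nlinarith⟩
  · rintro ⟨hu0, hu1⟩
    exact ⟨Real.sqrt u, ⟨Real.sqrt_pos.mpr hu0,
      (Real.sqrt_lt' one_pos).mpr (by simpa using hu1)⟩, Real.sq_sqrt hu0.le⟩

lemma moment_even (j : ℕ) {b : ℝ} (hb : 0 ≤ b) :
    (∫ t in (-1:ℝ)..1, t ^ (2*j) * (1 - t^2) ^ b) =
      Real.Gamma ((j:ℝ) + 1/2) * Real.Gamma (b+1) / Real.Gamma ((j:ℝ) + 1/2 + (b+1)) := by
  have hcont : Continuous fun t : ℝ => t ^ (2*j) * (1 - t^2) ^ b :=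
    (continuous_pow _).mul (contWeight hb)
  -- change of variables on (0,1)
  have hcov := integral_image_eq_integral_abs_deriv_smul (f := fun t : ℝ => t ^ 2)
      (f' := fun t : ℝ => 2 * t) (s := Set.Ioo (0:ℝ) 1) measurableSet_Ioo
      (fun x _ => ((hasDerivAt_pow 2 x).congr_deriv (by ring)).hasDerivWithinAt)
      (fun x hx y hy h => by
        simp only [Set.mem_Ioo] at hx hy
        have h' : x ^ 2 = y ^ 2 := h
        nlinarith [hx.1, hy.1, h'])
      (fun u => u ^ ((j:ℝ) - 1/2) * (1 - u) ^ b)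
  rw [sq_image_Ioo] at hcov
  have hrhs : (∫ t in Set.Ioo (0:ℝ) 1,
      |2 * t| • ((t^2) ^ ((j:ℝ) - 1/2) * (1 - t^2) ^ b)) =
      ∫ t in Set.Ioo (0:ℝ) 1, 2 * (t ^ (2*j) * (1 - t^2) ^ b) := by
    refine setIntegral_congr_fun measurableSet_Ioo fun t ht => ?_
    obtain ⟨ht0, ht1⟩ := ht
    have h1 : |2 * t| = 2 * t := abs_of_pos (by linarith)
    have h2 : t * (t^2) ^ ((j:ℝ) - 1/2) = t ^ (2*j) := by
      rw [← Real.rpow_natCast t 2, ← Real.rpow_mul ht0.le]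
      nth_rewrite 1 [← Real.rpow_one t]
      rw [← Real.rpow_add ht0, ← Real.rpow_natCast t (2*j)]
      norm_num; ring_nf
    rw [smul_eq_mul, h1]
    rw [← h2]; ring
  have hlhs : (∫ x in Set.Ioo (0:ℝ) 1, x ^ ((j:ℝ) - 1/2) * (1 - x) ^ b) =
      Real.Gamma ((j:ℝ) + 1/2) * Real.Gamma (b+1) / Real.Gamma ((j:ℝ) + 1/2 + (b+1)) := by
    rw [← integral_Ioc_eq_integral_Ioo, ← intervalIntegral.integral_of_le (by norm_num : (0:ℝ) ≤ 1)]
    have := realBeta (a := (j:ℝ) + 1/2) (b := b + 1) (by positivity) (by linarith)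
    rw [← this]
    apply intervalIntegral.integral_congr
    intro x hx
    have h1 : (j:ℝ) + 1/2 - 1 = (j:ℝ) - 1/2 := by ring
    have h2 : b + 1 - 1 = b := by ring
    rw [h1, h2]
  have hsplit : (∫ t in (-1:ℝ)..1, t ^ (2*j) * (1 - t^2) ^ b) =
      2 * ∫ t in Set.Ioo (0:ℝ) 1, t ^ (2*j) * (1 - t^2) ^ b := by
    rw [← intervalIntegral.integral_add_adjacent_intervals (a := (-1:ℝ)) (b := (0:ℝ)) (c := (1:ℝ))
      (hcont.intervalIntegrable _ _) (hcont.intervalIntegrable _ _)]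
    have hneg : (∫ t in (-1:ℝ)..0, t ^ (2*j) * (1 - t^2) ^ b)
        = ∫ t in (0:ℝ)..1, t ^ (2*j) * (1 - t^2) ^ b := by
      have h := intervalIntegral.integral_comp_neg (a := (0:ℝ)) (b := 1)
        (fun t : ℝ => t ^ (2*j) * (1 - t^2) ^ b)
      simp only [neg_zero, neg_sq, (even_two_mul j).neg_pow] at h
      rw [← h]
    rw [hneg, intervalIntegral.integral_of_le (by norm_num : (0:ℝ) ≤ 1),
      integral_Ioc_eq_integral_Ioo]
    ring
  rw [hsplit, ← hlhs, hcov, hrhs, MeasureTheory.integral_const_mul]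

lemma fSmooth (k : ℕ) {α : ℝ} (hα : 0 ≤ α) :
    ContDiff ℝ k (fun s : ℝ => (1 - s^2) ^ ((k:ℝ) + α)) := by
  have h1 : ContDiff ℝ k (fun s : ℝ => 1 - s^2) := by
    exact contDiff_const.sub (contDiff_id.pow 2)
  exact (Real.contDiff_rpow_const_of_le (by exact le_add_of_nonneg_right hα)).comp h1

lemma fStruct (k : ℕ) {α : ℝ} (hα : 0 ≤ α) (m : ℕ) (hm : m ≤ k) :
    ∃ q : Polynomial ℝ, ∀ s ∈ Set.Ioo (-1:ℝ) 1,
      iteratedDeriv m (fun s : ℝ => (1 - s^2) ^ ((k:ℝ) + α)) s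
        = (1 - s^2) ^ ((k:ℝ) + α - m) * q.eval s := by
  induction m with
  | zero =>
    exact ⟨1, fun s _ => by simp⟩
  | succ m ih =>
    obtain ⟨q, hq⟩ := ih (le_of_lt (Nat.lt_of_succ_le hm))
    set β : ℝ := (k:ℝ) + α - m with hβ
    refine ⟨Polynomial.C (-2*β) * Polynomial.X * q
      + (1 - Polynomial.X^2) * q.derivative, fun s hs => ?_⟩
    obtain ⟨hs1, hs2⟩ := hs
    have hpos : 0 < 1 - s^2 := by nlinarith
    -- iteratedDeriv (m+1) = deriv of iteratedDeriv m, and locally equal to explicit formula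
    have heq : iteratedDeriv m (fun s : ℝ => (1 - s^2) ^ ((k:ℝ) + α))
        =ᶠ[nhds s] fun s => (1 - s^2) ^ β * q.eval s := by
      filter_upwards [isOpen_Ioo.mem_nhds ⟨hs1, hs2⟩] with x hx
      exact hq x hx
    have hd1 : HasDerivAt (fun s : ℝ => 1 - s^2) (-(2*s)) s := by
      simpa using ((hasDerivAt_pow 2 s).const_sub 1)
    have hd2 : HasDerivAt (fun x : ℝ => x ^ β) (β * (1-s^2) ^ (β - 1)) (1 - s^2) :=
      Real.hasDerivAt_rpow_const (Or.inl hpos.ne')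
    have hd3 : HasDerivAt (fun s : ℝ => (1 - s^2) ^ β)
        (β * (1-s^2) ^ (β - 1) * -(2*s)) s := by have h := hd2.comp s hd1; exact h
    have hd4 : HasDerivAt (fun s : ℝ => (1 - s^2) ^ β * q.eval s)
        (β * (1-s^2) ^ (β - 1) * -(2*s) * q.eval s
          + (1 - s^2) ^ β * q.derivative.eval s) s :=
      hd3.mul (q.hasDerivAt s)
    rw [iteratedDeriv_succ, heq.deriv_eq, hd4.deriv]
    have hsplit : (1 - s^2) ^ β = (1 - s^2) ^ (β - 1) * (1 - s^2) := by
      have h := (Real.rpow_add hpos (β-1) 1).symm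
      simpa using h.symm
    have hexp : (k:ℝ) + α - (m+1 : ℕ) = β - 1 := by push_cast [hβ]; ring
    rw [hexp, hsplit]
    simp only [Polynomial.eval_add, Polynomial.eval_mul, Polynomial.eval_C,
      Polynomial.eval_X, Polynomial.eval_sub, Polynomial.eval_pow, Polynomial.eval_one]
    ring

lemma fBoundary (k : ℕ) {α : ℝ} (hα : 0 ≤ α) (m : ℕ) (hm : m < k) {x : ℝ}
    (hx : x = 1 ∨ x = -1) :
    iteratedDeriv m (fun s : ℝ => (1 - s^2) ^ ((k:ℝ) + α)) x = 0 := by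
  set f : ℝ → ℝ := fun s : ℝ => (1 - s^2) ^ ((k:ℝ) + α) with hf
  obtain ⟨q, hq⟩ := fStruct k hα m hm.le
  have hcont : Continuous (iteratedDeriv m f) :=
    (fSmooth k hα).continuous_iteratedDeriv m (by exact_mod_cast hm.le)
  have hne : (nhdsWithin x (Set.Ioo (-1:ℝ) 1)).NeBot := by
    rw [mem_closure_iff_nhdsWithin_neBot.symm, closure_Ioo (by norm_num : (-1:ℝ) ≠ 1)]
    rcases hx with rfl | rfl <;> simp [Set.mem_Icc] <;> norm_num
  have h1 : Filter.Tendsto (iteratedDeriv m f) (nhdsWithin x (Set.Ioo (-1:ℝ) 1))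
      (nhds (iteratedDeriv m f x)) :=
    (hcont.continuousAt.tendsto).mono_left nhdsWithin_le_nhds
  have hβ : (0:ℝ) < (k:ℝ) + α - m := by
    have : (m:ℝ) < k := by exact_mod_cast hm
    linarith
  have h2 : Filter.Tendsto (fun s : ℝ => (1 - s^2) ^ ((k:ℝ) + α - m) * q.eval s)
      (nhdsWithin x (Set.Ioo (-1:ℝ) 1)) (nhds 0) := by
    have hbase : Filter.Tendsto (fun s : ℝ => 1 - s^2) (nhdsWithin x (Set.Ioo (-1:ℝ) 1))
        (nhds 0) := by
      have : Filter.Tendsto (fun s : ℝ => 1 - s^2) (nhds x) (nhds (1 - x^2)) :=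
        (continuous_const.sub (continuous_pow 2)).continuousAt
      have hx0 : 1 - x^2 = 0 := by rcases hx with rfl | rfl <;> norm_num
      rw [hx0] at this
      exact this.mono_left nhdsWithin_le_nhds
    have hrpow : Filter.Tendsto (fun y : ℝ => y ^ ((k:ℝ) + α - m)) (nhds 0) (nhds 0) := by
      have hc : ContinuousAt (fun y : ℝ => y ^ ((k:ℝ) + α - m)) 0 :=
        Real.continuousAt_rpow_const 0 _ (Or.inr hβ.le)
      have : (0:ℝ) ^ ((k:ℝ) + α - m) = 0 := Real.zero_rpow hβ.ne'
      simpa [this] using hc.tendsto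
    have hmul := (hrpow.comp hbase).mul
      (((q.continuous_aeval).tendsto x).mono_left nhdsWithin_le_nhds)
    simpa using hmul
  have h3 : Filter.Tendsto (iteratedDeriv m f) (nhdsWithin x (Set.Ioo (-1:ℝ) 1)) (nhds 0) := by
    refine h2.congr' ?_
    filter_upwards [self_mem_nhdsWithin] with s hs
    exact (hq s hs).symm
  exact tendsto_nhds_unique h1 h3

lemma fIBP (k : ℕ) {α : ℝ} (hα : 0 ≤ α) (p : ℕ) :
    (∫ t in (-1:ℝ)..1, t ^ p *
        iteratedDeriv k (fun s : ℝ => (1 - s^2) ^ ((k:ℝ) + α)) t)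
      = (-1:ℝ)^k * (p.descFactorial k) *
          ∫ t in (-1:ℝ)..1, t ^ (p - k) * (1 - t^2) ^ ((k:ℝ) + α) := by
  set f : ℝ → ℝ := fun s : ℝ => (1 - s^2) ^ ((k:ℝ) + α) with hfdef
  have hf : ContDiff ℝ k f := fSmooth k hα
  have key : ∀ m, m ≤ k →
      (∫ t in (-1:ℝ)..1, t ^ p * iteratedDeriv k f t)
        = (-1:ℝ)^m * (p.descFactorial m) *
            ∫ t in (-1:ℝ)..1, t ^ (p - m) * iteratedDeriv (k - m) f t := by
    intro m hm
    induction m with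
    | zero => simp
    | succ m ih =>
      rw [ih (Nat.le_of_succ_le hm)]
      have hmk : m < k := Nat.lt_of_succ_le hm
      -- integrate by parts once
      have hsub : k - m - 1 + 1 = k - m := by omega
      have hvderiv : ∀ x ∈ Set.uIcc (-1:ℝ) 1,
          HasDerivAt (iteratedDeriv (k - m - 1) f) (iteratedDeriv (k - m) f x) x := by
        intro x _
        have hdiff : Differentiable ℝ (iteratedDeriv (k - m - 1) f) :=
          hf.differentiable_iteratedDeriv (k - m - 1) (by exact_mod_cast (by omega : k - m - 1 < k))
        have := (hdiff x).hasDerivAt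
        rwa [← iteratedDeriv_succ, hsub] at this
      have huderiv : ∀ x ∈ Set.uIcc (-1:ℝ) 1,
          HasDerivAt (fun t : ℝ => t ^ (p - m))
            (((p - m : ℕ) : ℝ) * x ^ (p - m - 1)) x := by
        intro x _
        simpa using hasDerivAt_pow (p - m) x
      have hint1 : IntervalIntegrable (fun x : ℝ => ((p - m : ℕ) : ℝ) * x ^ (p - m - 1))
          volume (-1) 1 := (Continuous.intervalIntegrable (by fun_prop) _ _)
      have hint2 : IntervalIntegrable (iteratedDeriv (k - m) f) volume (-1) 1 :=
        ((hf.continuous_iteratedDeriv (k - m) (by exact_mod_cast Nat.sub_le k m)).intervalIntegrable _ _)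
      have hibp := intervalIntegral.integral_mul_deriv_eq_deriv_mul
        huderiv hvderiv hint1 hint2
      have hb1 : iteratedDeriv (k - m - 1) f 1 = 0 :=
        fBoundary k hα _ (by omega) (Or.inl rfl)
      have hb2 : iteratedDeriv (k - m - 1) f (-1) = 0 :=
        fBoundary k hα _ (by omega) (Or.inr rfl)
      rw [hb1, hb2] at hibp
      rw [hibp]
      have hre : (∫ x in (-1:ℝ)..1, ((p - m : ℕ) : ℝ) * x ^ (p - m - 1)
            * iteratedDeriv (k - m - 1) f x)
          = ((p - m : ℕ) : ℝ) * ∫ x in (-1:ℝ)..1, x ^ (p - m - 1)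
            * iteratedDeriv (k - m - 1) f x := by
        rw [← intervalIntegral.integral_const_mul]
        apply intervalIntegral.integral_congr
        intro x _; ring
      rw [hre]
      simp only [Nat.descFactorial_succ, Nat.sub_sub]
      push_cast
      ring
  have := key k le_rfl
  rw [this]
  simp [iteratedDeriv_zero]
  exact Or.inl rfl


/-- The Gegenbauer polynomial
`P_{k,d}(t) = ((−1)^k/2^k) (Γ(d/2)/Γ(k+d/2)) (1−t²)^{−(d−2)/2} (d^k/dt^k)(1−t²)^{k+(d−2)/2}`. -/
noncomputable def gegenbauer (k d : ℕ) (t : ℝ) : ℝ :=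
  ((-1 : ℝ) ^ k / 2 ^ k) * (Real.Gamma ((d : ℝ) / 2) / Real.Gamma ((k : ℝ) + (d : ℝ) / 2)) *
    (1 - t ^ 2) ^ (-(((d : ℝ) - 2) / 2)) *
    iteratedDeriv k (fun s : ℝ => (1 - s ^ 2) ^ ((k : ℝ) + ((d : ℝ) - 2) / 2)) t

/-- Funk–Hecke eigenvalue of the dot-product kernel `θ(⟨x,y⟩)` on `S^{d−1}`:
`λ̄_k = Vol(S^{d−1}) ∫_{−1}^1 θ(t) P_{k,d}(t) (1−t²)^{(d−2)/2} dt` where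
`Vol(S^{d−1}) = 2π^{d/2}/Γ(d/2)`. -/
noncomputable def lambdaBar (d k : ℕ) (c : ℕ → ℝ) : ℝ :=
  (2 * Real.pi ^ ((d : ℝ) / 2) / Real.Gamma ((d : ℝ) / 2)) *
    ∫ t in (-1 : ℝ)..1,
      (∑' p : ℕ, c p * t ^ p) * gegenbauer k d t * (1 - t ^ 2) ^ (((d : ℝ) - 2) / 2)

lemma termIntegral (d k : ℕ) (hd : 2 ≤ d) (p : ℕ) :
    (∫ t in (-1:ℝ)..1, t ^ p * gegenbauer k d t * (1 - t^2) ^ (((d:ℝ)-2)/2))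
      = (1/2^k) * (Real.Gamma ((d:ℝ)/2) / Real.Gamma ((k:ℝ)+(d:ℝ)/2)) * (p.descFactorial k) *
          ∫ t in (-1:ℝ)..1, t ^ (p - k) * (1 - t^2) ^ ((k:ℝ) + ((d:ℝ)-2)/2) := by
  have hα : (0:ℝ) ≤ ((d:ℝ)-2)/2 := by
    have : (2:ℝ) ≤ (d:ℝ) := by exact_mod_cast hd
    linarith
  set α : ℝ := ((d:ℝ)-2)/2 with hαdef
  set g : ℝ → ℝ := iteratedDeriv k (fun s : ℝ => (1 - s^2) ^ ((k:ℝ) + α)) with hg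
  set C : ℝ := ((-1 : ℝ) ^ k / 2 ^ k) *
      (Real.Gamma ((d : ℝ) / 2) / Real.Gamma ((k : ℝ) + (d : ℝ) / 2)) with hC
  have step1 : (∫ t in (-1:ℝ)..1, t ^ p * gegenbauer k d t * (1 - t^2) ^ α)
      = C * ∫ t in (-1:ℝ)..1, t ^ p * g t := by
    rw [← intervalIntegral.integral_const_mul]
    rw [intervalIntegral.integral_of_le (by norm_num : (-1:ℝ) ≤ 1),
      intervalIntegral.integral_of_le (by norm_num : (-1:ℝ) ≤ 1),
      MeasureTheory.integral_Ioc_eq_integral_Ioo,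
      MeasureTheory.integral_Ioc_eq_integral_Ioo]
    refine MeasureTheory.setIntegral_congr_fun measurableSet_Ioo fun t ht => ?_
    obtain ⟨ht1, ht2⟩ := ht
    have hpos : 0 < 1 - t^2 := by nlinarith
    have hcancel : (1 - t^2) ^ (-α) * (1 - t^2) ^ α = 1 := by
      rw [Real.rpow_neg hpos.le]
      exact inv_mul_cancel₀ (Real.rpow_pos_of_pos hpos α).ne'
    show t ^ p * gegenbauer k d t * (1 - t^2) ^ α = C * (t ^ p * g t)
    rw [gegenbauer, ← hαdef, ← hg, hC]
    calc t ^ p * ((-1:ℝ)^k / 2^k * (Real.Gamma ((d:ℝ)/2) / Real.Gamma ((k:ℝ)+(d:ℝ)/2)) *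
          (1 - t^2) ^ (-α) * g t) * (1 - t^2) ^ α
        = ((-1:ℝ)^k / 2^k * (Real.Gamma ((d:ℝ)/2) / Real.Gamma ((k:ℝ)+(d:ℝ)/2))) *
            (t ^ p * g t) * ((1 - t^2) ^ (-α) * (1 - t^2) ^ α) := by ring
      _ = _ := by rw [hcancel, mul_one]
  rw [step1, fIBP k hα p]
  set I : ℝ := ∫ t in (-1:ℝ)..1, t ^ (p - k) * (1 - t^2) ^ ((k:ℝ) + α) with hI
  have hsq : ((-1:ℝ)^k) * ((-1:ℝ)^k) = 1 := by
    rw [← pow_add]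
    exact Even.neg_one_pow ⟨k, by ring⟩
  rw [hC]
  linear_combination ((Real.Gamma ((d:ℝ)/2) / Real.Gamma ((k:ℝ)+(d:ℝ)/2)) *
    (p.descFactorial k : ℝ) * I / 2^k) * hsq

lemma lambdaSwap (d k : ℕ) (hd : 2 ≤ d) (c : ℕ → ℝ) (hc : ∀ p, 0 ≤ c p)
    (hsum : Summable c) :
    (∫ t in (-1:ℝ)..1, (∑' p : ℕ, c p * t ^ p) * gegenbauer k d t
        * (1 - t^2) ^ (((d:ℝ)-2)/2))
      = ∑' p : ℕ, c p * ∫ t in (-1:ℝ)..1, t ^ p * gegenbauer k d t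
          * (1 - t^2) ^ (((d:ℝ)-2)/2) := by
  have h2d : (2:ℝ) ≤ (d:ℝ) := by exact_mod_cast hd
  have hα : (0:ℝ) ≤ ((d:ℝ)-2)/2 := by linarith
  set α : ℝ := ((d:ℝ)-2)/2 with hαdef
  set g : ℝ → ℝ := iteratedDeriv k (fun s : ℝ => (1 - s^2) ^ ((k:ℝ) + α)) with hg
  set C : ℝ := ((-1 : ℝ) ^ k / 2 ^ k) *
      (Real.Gamma ((d : ℝ) / 2) / Real.Gamma ((k : ℝ) + (d : ℝ) / 2)) with hC
  have hgcont : Continuous g :=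
    (fSmooth k hα).continuous_iteratedDeriv k le_rfl
  have hK : ∀ t ∈ Set.Ioo (-1:ℝ) 1,
      gegenbauer k d t * (1 - t^2) ^ α = C * g t := by
    intro t ht
    obtain ⟨ht1, ht2⟩ := ht
    have hpos : 0 < 1 - t^2 := by nlinarith
    have hcancel : (1 - t^2) ^ (-α) * (1 - t^2) ^ α = 1 := by
      rw [Real.rpow_neg hpos.le]
      exact inv_mul_cancel₀ (Real.rpow_pos_of_pos hpos α).ne'
    rw [gegenbauer, ← hαdef, ← hg, ← hC]
    calc C * (1 - t^2) ^ (-α) * g t * (1 - t^2) ^ α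
        = C * g t * ((1 - t^2) ^ (-α) * (1 - t^2) ^ α) := by ring
      _ = C * g t := by rw [hcancel, mul_one]
  -- bound for C * g on [-1,1]
  obtain ⟨B, hB⟩ := isCompact_Icc.exists_bound_of_continuousOn (f := fun t => C * g t)
    (s := Set.Icc (-1:ℝ) 1) ((continuous_const.mul hgcont).continuousOn)
  have hB0 : 0 ≤ B := le_trans (norm_nonneg _) (hB 0 (by norm_num))
  -- each term
  set F : ℕ → ℝ → ℝ := fun p t => c p * t ^ p * (C * g t) with hF
  have hFmeas : ∀ p, AEStronglyMeasurable (F p)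
      (volume.restrict (Set.Ioo (-1:ℝ) 1)) := fun p =>
    ((continuous_const.mul (continuous_pow p)).mul
      (continuous_const.mul hgcont)).aestronglyMeasurable
  have hFbound : ∀ p, (∫⁻ t in Set.Ioo (-1:ℝ) 1, ‖F p t‖₊)
      ≤ ENNReal.ofReal (c p * B) * ENNReal.ofReal 2 := by
    intro p
    have hptw : ∀ t ∈ Set.Ioo (-1:ℝ) 1,
        (‖F p t‖₊ : ENNReal) ≤ ENNReal.ofReal (c p * B) := by
      intro t ht
      have ht' : t ∈ Set.Icc (-1:ℝ) 1 := Set.mem_Icc_of_Ioo ht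
      rw [← ENNReal.ofReal_coe_nnreal, coe_nnnorm]
      apply ENNReal.ofReal_le_ofReal
      have h1 : ‖F p t‖ = |c p| * |t ^ p| * ‖C * g t‖ := by
        rw [hF]; simp [abs_mul]
      rw [h1, abs_of_nonneg (hc p)]
      have h2 : |t ^ p| ≤ 1 := by
        rw [abs_pow]
        apply pow_le_one₀ (abs_nonneg t)
        rw [abs_le]; exact ⟨ht'.1, ht'.2⟩
      calc c p * |t ^ p| * ‖C * g t‖ ≤ c p * 1 * B := by
            apply mul_le_mul (by nlinarith [hc p]) (hB t ht') (norm_nonneg _)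
            exact mul_nonneg (hc p) zero_le_one
        _ = c p * B := by ring
    calc (∫⁻ t in Set.Ioo (-1:ℝ) 1, ‖F p t‖₊)
        ≤ ∫⁻ _ in Set.Ioo (-1:ℝ) 1, ENNReal.ofReal (c p * B) :=
          setLIntegral_mono measurable_const hptw
      _ = ENNReal.ofReal (c p * B) * volume (Set.Ioo (-1:ℝ) 1) := setLIntegral_const _ _
      _ = ENNReal.ofReal (c p * B) * ENNReal.ofReal 2 := by
          rw [Real.volume_Ioo]; norm_num
  have hFsum : (∑' p, ∫⁻ t in Set.Ioo (-1:ℝ) 1, ‖F p t‖₊) ≠ ⊤ := by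
    refine ne_top_of_le_ne_top (b := ENNReal.ofReal (∑' p, c p * B) * ENNReal.ofReal 2)
      (by finiteness) ?_
    rw [ENNReal.ofReal_tsum_of_nonneg (fun p => mul_nonneg (hc p) hB0) (hsum.mul_right B),
      ← ENNReal.tsum_mul_right]
    exact ENNReal.tsum_le_tsum hFbound
  have hswap := MeasureTheory.integral_tsum hFmeas hFsum
  rw [intervalIntegral.integral_of_le (by norm_num : (-1:ℝ) ≤ 1),
    MeasureTheory.integral_Ioc_eq_integral_Ioo]
  have hL : (∫ t in Set.Ioo (-1:ℝ) 1, (∑' p : ℕ, c p * t ^ p) * gegenbauer k d t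
        * (1 - t^2) ^ α)
      = ∫ t in Set.Ioo (-1:ℝ) 1, ∑' p : ℕ, F p t := by
    refine MeasureTheory.setIntegral_congr_fun measurableSet_Ioo fun t ht => ?_
    show (∑' p : ℕ, c p * t ^ p) * gegenbauer k d t * (1 - t^2) ^ α = ∑' p : ℕ, F p t
    rw [mul_assoc, hK t ht, ← tsum_mul_right]
  rw [hL, hswap]
  refine tsum_congr fun p => ?_
  rw [intervalIntegral.integral_of_le (by norm_num : (-1:ℝ) ≤ 1),
    MeasureTheory.integral_Ioc_eq_integral_Ioo, ← MeasureTheory.integral_const_mul]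
  refine MeasureTheory.setIntegral_congr_fun measurableSet_Ioo fun t ht => ?_
  show F p t = c p * (t ^ p * gegenbauer k d t * (1 - t^2) ^ α)
  rw [mul_assoc, hK t ht, hF]
  ring

/-- Explicit formula for the Funk–Hecke eigenvalues of a dot-product kernel with nonnegative
summable power-series coefficients:
`λ̄_k = (π^{d/2}/2^{k−1}) Σ_{p ≥ k, p−k even} c_p Γ(p+1)Γ((p−k+1)/2) /
(Γ(p−k+1)Γ((p−k+1)/2+k+d/2))`, where the sum is reindexed by `p = k + 2j`. -/
theorem funk_hecke_eigenvalue_formula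
    (d : ℕ) (hd : 2 ≤ d)
    (c : ℕ → ℝ) (hc : ∀ p, 0 ≤ c p) (hsum : Summable c) :
    ∀ k : ℕ, lambdaBar d k c =
      Real.pi ^ ((d : ℝ) / 2) / (2 : ℝ) ^ ((k : ℝ) - 1) *
        ∑' j : ℕ, c (k + 2 * j) *
          (Real.Gamma ((k : ℝ) + 2 * (j : ℝ) + 1) * Real.Gamma ((2 * (j : ℝ) + 1) / 2)) /
          (Real.Gamma (2 * (j : ℝ) + 1) *
            Real.Gamma ((2 * (j : ℝ) + 1) / 2 + (k : ℝ) + (d : ℝ) / 2)) := by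
  intro k
  have h2d : (2:ℝ) ≤ (d:ℝ) := by exact_mod_cast hd
  have hb : (0:ℝ) ≤ (k:ℝ) + ((d:ℝ)-2)/2 := by
    have hk0 : (0:ℝ) ≤ (k:ℝ) := Nat.cast_nonneg k
    linarith
  rw [lambdaBar, lambdaSwap d k hd c hc hsum]
  set V : ℝ := 2 * Real.pi ^ ((d : ℝ) / 2) / Real.Gamma ((d : ℝ) / 2) with hV
  -- the summand as a function of p
  set T : ℕ → ℝ := fun p => c p * ∫ t in (-1:ℝ)..1, t ^ p * gegenbauer k d t
      * (1 - t^2) ^ (((d:ℝ)-2)/2) with hT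
  have hvanish : ∀ p : ℕ, p ∉ Set.range (fun j : ℕ => k + 2 * j) → T p = 0 := by
    intro p hp
    rw [hT]
    rcases lt_or_ge p k with hpk | hpk
    · simp only []
      rw [termIntegral d k hd p, Nat.descFactorial_eq_zero_iff_lt.mpr hpk]
      simp
    · have hodd : Odd (p - k) := by
        rcases Nat.even_or_odd (p - k) with he | ho
        · exfalso; apply hp
          obtain ⟨j, hj⟩ := he
          exact ⟨j, show k + 2 * j = p by omega⟩
        · exact ho
      simp only []
      rw [termIntegral d k hd p, moment_odd (p - k) hodd _]
      simp
  have hinj : Function.Injective (fun j : ℕ => k + 2 * j) := by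
    intro a b h
    have h' : k + 2 * a = k + 2 * b := h
    omega
  have hsupp : Function.support T ⊆ Set.range (fun j : ℕ => k + 2 * j) := by
    intro p hp
    by_contra hmem
    exact hp (hvanish p hmem)
  rw [← hinj.tsum_eq hsupp]
  -- now both sides are tsums over j; pull constants inside and compare termwise
  rw [← tsum_mul_left, ← tsum_mul_left]
  refine tsum_congr fun j => ?_
  rw [hT]
  simp only []
  rw [termIntegral d k hd (k + 2*j)]
  have hsub : k + 2*j - k = 2*j := by omega
  rw [hsub, moment_even j hb]
  -- Gamma arguments normalization
  have hG1 : Real.Gamma ((k:ℝ) + ((d:ℝ)-2)/2 + 1) = Real.Gamma ((k:ℝ) + (d:ℝ)/2) := by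
    congr 1; ring
  have hG2 : Real.Gamma ((j:ℝ) + 1/2 + ((k:ℝ) + ((d:ℝ)-2)/2 + 1))
      = Real.Gamma ((2*(j:ℝ)+1)/2 + (k:ℝ) + (d:ℝ)/2) := by
    congr 1; ring
  have hG3 : Real.Gamma ((k:ℝ) + 2*(j:ℝ) + 1) = ((k + 2*j).factorial : ℝ) := by
    have : (k:ℝ) + 2*(j:ℝ) + 1 = ((k + 2*j : ℕ) : ℝ) + 1 := by push_cast; ring
    rw [this, Real.Gamma_nat_eq_factorial]
  have hG4 : Real.Gamma (2*(j:ℝ) + 1) = ((2*j).factorial : ℝ) := by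
    have : 2*(j:ℝ) + 1 = ((2*j : ℕ) : ℝ) + 1 := by push_cast; ring
    rw [this, Real.Gamma_nat_eq_factorial]
  have hG5 : Real.Gamma ((2*(j:ℝ)+1)/2) = Real.Gamma ((j:ℝ) + 1/2) := by
    congr 1; ring
  have hdesc : ((k + 2*j).descFactorial k : ℝ)
      = ((k + 2*j).factorial : ℝ) / ((2*j).factorial : ℝ) := by
    have h := Nat.factorial_mul_descFactorial (show k ≤ k + 2*j by omega)
    rw [hsub] at h
    have h2j : ((2*j).factorial : ℝ) ≠ 0 := by positivity
    field_simp
    exact_mod_cast congrArg (Nat.cast (R := ℝ)) (by rw [Nat.mul_comm]; exact h : (k+2*j).descFactorial k * (2*j).factorial = (k + 2*j).factorial)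
  rw [hG1, hG2, hG3, hG4, hG5, hdesc, hV]
  have hpow2 : (2:ℝ) ^ ((k:ℝ) - 1) = 2^k / 2 := by
    rw [Real.rpow_sub (by norm_num : (0:ℝ) < 2), Real.rpow_one, Real.rpow_natCast]
  rw [hpow2]
  have hk0 : (0:ℝ) ≤ (k:ℝ) := Nat.cast_nonneg k
  have hj0 : (0:ℝ) ≤ (j:ℝ) := Nat.cast_nonneg j
  have hGd2 : Real.Gamma ((d:ℝ)/2) ≠ 0 := (Real.Gamma_pos_of_pos (by linarith)).ne'
  have hGkd2 : Real.Gamma ((k:ℝ)+(d:ℝ)/2) ≠ 0 :=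
    (Real.Gamma_pos_of_pos (by linarith)).ne'
  have hGj : Real.Gamma ((j:ℝ)+1/2) ≠ 0 :=
    (Real.Gamma_pos_of_pos (by linarith)).ne'
  have hGbig : Real.Gamma ((2*(j:ℝ)+1)/2 + (k:ℝ) + (d:ℝ)/2) ≠ 0 :=
    (Real.Gamma_pos_of_pos (by linarith)).ne'
  have hfac : ((2*j).factorial : ℝ) ≠ 0 := by positivity
  have h2k : ((2:ℝ)^k) ≠ 0 := by positivity
  field_simp
end

section
/- Let G ∈ ℝ^{n×n} be a symmetric positive semidefinite matrix of rank r with 2 ≤ r, let (c_j)_{j=0}^{m−1} be real coefficients and define H_m := Σ_{j=0}^{m−1} c_j G^{⊙j}. Then rank(H_m) ≤ 1 + min{r−1, m−1}·(2e)^{r−1} + max{0, m−r}·(2e/(r−1))^{r−1}·(m−1)^{r−1}. -/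
open Matrix

/-- Entrywise (Hadamard) power of a square matrix; the `0`-th power is the all-ones matrix. -/
def hadPow {n : ℕ} (A : Matrix (Fin n) (Fin n) ℝ) (k : ℕ) : Matrix (Fin n) (Fin n) ℝ :=
  Matrix.of fun i j => (A i j) ^ k

/-- The multiset of values of a function `Fin j → Fin r`, as an element of `Sym (Fin r) j`. -/
def symOf {r j : ℕ} (f : Fin j → Fin r) : Sym (Fin r) j :=
  ⟨Multiset.map f Finset.univ.val, by simp⟩

/-- Multinomial-type expansion of a power of a sum, grouped by multisets. -/
lemma sum_pow_sym {r : ℕ} (j : ℕ) (z : Fin r → ℝ) :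
    (∑ k, z k) ^ j
      = ∑ s : Sym (Fin r) j,
          (({f : Fin j → Fin r | symOf f = s} : Finset _).card : ℝ)
            * ((s : Multiset (Fin r)).map z).prod := by
  classical
  rw [Finset.sum_pow' Finset.univ z j, Fintype.piFinset_univ]
  rw [← Finset.sum_fiberwise Finset.univ (fun f : Fin j → Fin r => symOf f)
        (fun f => ∏ i, z (f i))]
  refine Finset.sum_congr rfl fun s _ => ?_
  rw [Finset.sum_congr rfl (fun f hf => ?_), Finset.sum_const, nsmul_eq_mul]
  · simp only [Finset.mem_filter] at hf
    rw [← hf.2]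
    show ∏ i, z (f i) = ((symOf f : Multiset (Fin r)).map z).prod
    rw [show (symOf f : Multiset (Fin r)) = Multiset.map f Finset.univ.val from rfl,
      Multiset.map_map]
    rfl

/-- Any matrix of rank `r` admits a decomposition as a sum of `r` rank-one matrices. -/
lemma exists_rank_decomp {n r : ℕ} (G : Matrix (Fin n) (Fin n) ℝ) (h : G.rank = r) :
    ∃ u v : Fin r → Fin n → ℝ, ∀ i j, G i j = ∑ k, u k i * v k j := by
  classical
  have hfin : Module.finrank ℝ (LinearMap.range G.mulVecLin) = r := h
  let b : Module.Basis (Fin r) ℝ (LinearMap.range G.mulVecLin) :=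
    Module.finBasisOfFinrankEq ℝ _ hfin
  refine ⟨fun k i => (b k : Fin n → ℝ) i,
    fun k j => b.repr ⟨G.mulVecLin (Pi.single j 1), LinearMap.mem_range_self _ _⟩ k, ?_⟩
  intro i j
  have hs := b.sum_repr ⟨G.mulVecLin (Pi.single j 1), LinearMap.mem_range_self _ _⟩
  have := congrFun (congrArg (Subtype.val) hs) i
  simp only [Matrix.mulVecLin_apply, Matrix.mulVec_single_one, Matrix.col_apply, mul_one] at this ⊢
  rw [← this]
  simp only [Submodule.coe_sum, Finset.sum_apply, Submodule.coe_smul, Pi.smul_apply, smul_eq_mul, mul_comm]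

/-- A matrix whose entries admit a decomposition indexed by a finite type has rank
at most the cardinality of the index type. -/
lemma rank_le_card_of_decomp {n : ℕ} {ι : Type*} [Fintype ι]
    (M : Matrix (Fin n) (Fin n) ℝ) (a b : ι → Fin n → ℝ)
    (h : ∀ i i', M i i' = ∑ k, a k i * b k i') :
    M.rank ≤ Fintype.card ι := by
  have hM : M = (Matrix.of fun i (k : ι) => a k i) * (Matrix.of fun (k : ι) i' => b k i') := by
    ext i i'; simp [Matrix.mul_apply, h]
  rw [hM]
  exact (Matrix.rank_mul_le_right _ _).trans (Matrix.rank_le_card_height _)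

/-- `C(n,k) ≤ (e n / k)^k`. -/
lemma choose_le_epow {n k : ℕ} (hk : 1 ≤ k) :
    (n.choose k : ℝ) ≤ (Real.exp 1 * n / k) ^ k := by
  have hkpos : (0 : ℝ) < k := by exact_mod_cast hk
  have h1 : (n.choose k : ℝ) ≤ (n : ℝ) ^ k / (k.factorial : ℝ) :=
    Nat.choose_le_pow_div k n
  have h2 : (k : ℝ) ^ k ≤ Real.exp 1 ^ k * (k.factorial : ℝ) := by
    have hfac : (0:ℝ) < k.factorial := by exact_mod_cast k.factorial_pos
    have := Real.pow_div_factorial_le_exp (x := (k:ℝ)) (le_of_lt hkpos) k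
    rw [div_le_iff₀ hfac] at this
    calc (k:ℝ)^k ≤ Real.exp k * k.factorial := this
      _ = Real.exp 1 ^ k * k.factorial := by rw [← Real.exp_nat_mul, mul_one]
  have hfac : (0:ℝ) < k.factorial := by exact_mod_cast k.factorial_pos
  calc (n.choose k : ℝ) ≤ (n : ℝ) ^ k / (k.factorial : ℝ) := h1
    _ ≤ (Real.exp 1 * n / k) ^ k := by
        rw [div_pow, mul_pow, div_le_div_iff₀ hfac (by positivity)]
        calc (n:ℝ)^k * (k:ℝ)^k ≤ (n:ℝ)^k * (Real.exp 1 ^ k * k.factorial) := by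
              have : (0:ℝ) ≤ (n:ℝ)^k := by positivity
              exact mul_le_mul_of_nonneg_left h2 this
          _ = Real.exp 1 ^ k * (n:ℝ)^k * k.factorial := by ring

lemma multichoose_le_epow {r j : ℕ} (hr : 2 ≤ r) (hj : 1 ≤ j) :
    (Nat.multichoose r j : ℝ) ≤ (Real.exp 1 * ((r:ℝ) + j - 1) / ((r:ℝ) - 1)) ^ (r - 1) := by
  have h1 : Nat.multichoose r j = (r + j - 1).choose (r - 1) := by
    rw [Nat.multichoose_eq]
    rw [← Nat.choose_symm (by omega : j ≤ r + j - 1)]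
    congr 1
    omega
  rw [h1]
  have := choose_le_epow (n := r + j - 1) (k := r - 1) (by omega)
  convert this using 3 <;> push_cast [Nat.cast_sub (by omega : 1 ≤ r + j), 
    Nat.cast_sub (by omega : 1 ≤ r)] <;> ring

lemma multichoose_mid {r j : ℕ} (hr : 2 ≤ r) (hj1 : 1 ≤ j) (hj2 : j ≤ r - 1) :
    (Nat.multichoose r j : ℝ) ≤ (2 * Real.exp 1) ^ (r - 1) := by
  refine (multichoose_le_epow hr hj1).trans ?_
  have he : (0:ℝ) < Real.exp 1 := Real.exp_pos 1
  have hr1 : (0:ℝ) < (r:ℝ) - 1 := by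
    have : (2:ℝ) ≤ r := by exact_mod_cast hr
    linarith
  have hbase : (0:ℝ) ≤ Real.exp 1 * ((r:ℝ) + j - 1) / ((r:ℝ) - 1) := by
    apply div_nonneg _ hr1.le
    have h0 : (1:ℝ) ≤ (r:ℝ) := by exact_mod_cast (by omega : 1 ≤ r)
    have h0' : (0:ℝ) ≤ (j:ℝ) := by positivity
    nlinarith
  apply pow_le_pow_left₀ hbase
  rw [div_le_iff₀ hr1]
  have hjle : (j:ℝ) ≤ (r:ℝ) - 1 := by
    have : (j:ℝ) ≤ ((r - 1 : ℕ) : ℝ) := by exact_mod_cast hj2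
    rwa [Nat.cast_sub (by omega), Nat.cast_one] at this
  nlinarith

lemma multichoose_tail {r j : ℕ} (hr : 2 ≤ r) (hjr : r ≤ j) :
    (Nat.multichoose r j : ℝ)
      ≤ (2 * Real.exp 1 / ((r:ℝ) - 1)) ^ (r - 1) * (j:ℝ) ^ (r - 1) := by
  refine (multichoose_le_epow hr (by omega)).trans ?_
  have he : (0:ℝ) < Real.exp 1 := Real.exp_pos 1
  have hr1 : (0:ℝ) < (r:ℝ) - 1 := by
    have : (2:ℝ) ≤ r := by exact_mod_cast hr
    linarith
  rw [← mul_pow]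
  have hbase : (0:ℝ) ≤ Real.exp 1 * ((r:ℝ) + j - 1) / ((r:ℝ) - 1) := by
    apply div_nonneg _ hr1.le
    have h0 : (1:ℝ) ≤ (r:ℝ) := by exact_mod_cast (by omega : 1 ≤ r)
    have h0' : (0:ℝ) ≤ (j:ℝ) := by positivity
    nlinarith
  apply pow_le_pow_left₀ hbase
  rw [div_mul_eq_mul_div]
  rw [div_le_div_iff₀ hr1 hr1]
  have hjr' : (r:ℝ) ≤ (j:ℝ) := by exact_mod_cast hjr
  nlinarith [mul_nonneg (mul_nonneg he.le
    (by linarith : (0:ℝ) ≤ 2 * (j:ℝ) - ((r:ℝ) + j - 1))) hr1.le]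

/-- Rank bound for `H_m = Σ_{j=0}^{m−1} c_j G^{⊙j}` when `G` is PSD of rank `r ≥ 2`:
`rank(H_m) ≤ 1 + min{r−1, m−1}(2e)^{r−1} + max{0, m−r}(2e/(r−1))^{r−1}(m−1)^{r−1}`. -/
theorem rank_head_bound
    (n r : ℕ) (G : Matrix (Fin n) (Fin n) ℝ)
    (hG : G.PosSemidef) (hrank : G.rank = r) (hr : 2 ≤ r)
    (m : ℕ) (c : ℕ → ℝ)
    (Hm : Matrix (Fin n) (Fin n) ℝ)
    (hHm : Hm = ∑ j ∈ Finset.range m, c j • hadPow G j) :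
    (Hm.rank : ℝ) ≤
      1 + ((min (r - 1) (m - 1) : ℕ) : ℝ) * (2 * Real.exp 1) ^ (r - 1)
        + ((m - r : ℕ) : ℝ) * (2 * Real.exp 1 / ((r : ℝ) - 1)) ^ (r - 1)
          * (((m - 1 : ℕ) : ℝ)) ^ (r - 1) := by
  classical
  have he : (0:ℝ) < Real.exp 1 := Real.exp_pos 1
  have hr1 : (0:ℝ) < (r:ℝ) - 1 := by
    have : (2:ℝ) ≤ r := by exact_mod_cast hr
    linarith
  obtain ⟨u, v, huv⟩ := exists_rank_decomp G hrank
  -- rank bound via a big decomposition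
  have hrankHm : Hm.rank ≤ Fintype.card ((j : Fin m) × Sym (Fin r) j.val) := by
    apply rank_le_card_of_decomp Hm
      (fun p i => c p.1 * (({f : Fin (p.1 : ℕ) → Fin r | symOf f = p.2} : Finset _).card : ℝ)
        * ((p.2 : Multiset (Fin r)).map (fun k => u k i)).prod)
      (fun p i' => ((p.2 : Multiset (Fin r)).map (fun k => v k i')).prod)
    intro i i'
    rw [hHm]
    simp only [Matrix.sum_apply, Matrix.smul_apply, smul_eq_mul, hadPow, Matrix.of_apply]
    rw [← Finset.univ_sigma_univ, Finset.sum_sigma,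
      ← Fin.sum_univ_eq_sum_range (fun j => c j * (G i i') ^ j) m]
    refine Finset.sum_congr rfl fun j _ => ?_
    rw [huv i i', sum_pow_sym (j : ℕ) (fun k => u k i * v k i'), Finset.mul_sum]
    refine Finset.sum_congr rfl fun s _ => ?_
    have : ((s : Multiset (Fin r)).map fun k => u k i * v k i').prod
        = ((s : Multiset (Fin r)).map fun k => u k i).prod
          * ((s : Multiset (Fin r)).map fun k => v k i').prod := by
      rw [← Multiset.prod_map_mul]
    rw [this]; ring
  -- the cardinality
  have hcard : Fintype.card ((j : Fin m) × Sym (Fin r) j.val)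
      = ∑ j ∈ Finset.range m, Nat.multichoose r j := by
    rw [Fintype.card_sigma]
    rw [← Fin.sum_univ_eq_sum_range (fun j => Nat.multichoose r j) m]
    refine Finset.sum_congr rfl fun j _ => ?_
    rw [Sym.card_sym_eq_multichoose, Fintype.card_fin]
  -- real bound on the sum
  have key : ((∑ j ∈ Finset.range m, Nat.multichoose r j : ℕ) : ℝ)
      ≤ 1 + ((min (r - 1) (m - 1) : ℕ) : ℝ) * (2 * Real.exp 1) ^ (r - 1)
        + ((m - r : ℕ) : ℝ) * (2 * Real.exp 1 / ((r : ℝ) - 1)) ^ (r - 1)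
          * (((m - 1 : ℕ) : ℝ)) ^ (r - 1) := by
    rcases Nat.eq_zero_or_pos m with hm | hm
    · subst hm
      norm_num
    · push_cast
      set t := min r m with ht
      have h1t : 1 ≤ t := by omega
      have htm : t ≤ m := by omega
      have hsplit : ∑ j ∈ Finset.range m, ((Nat.multichoose r j : ℕ) : ℝ)
          = (∑ j ∈ Finset.Ico 0 1, ((Nat.multichoose r j : ℕ) : ℝ))
            + (∑ j ∈ Finset.Ico 1 t, ((Nat.multichoose r j : ℕ) : ℝ))
            + (∑ j ∈ Finset.Ico t m, ((Nat.multichoose r j : ℕ) : ℝ)) := by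
        rw [Finset.sum_Ico_consecutive _ (by omega : (0:ℕ) ≤ 1) (by omega : 1 ≤ t),
          Finset.sum_Ico_consecutive _ (by omega : (0:ℕ) ≤ t) htm]
        rw [Finset.range_eq_Ico]
      rw [hsplit]
      have e1 : (∑ j ∈ Finset.Ico 0 1, ((Nat.multichoose r j : ℕ) : ℝ)) = 1 := by
        simp [Nat.multichoose]
      have e2 : (∑ j ∈ Finset.Ico 1 t, ((Nat.multichoose r j : ℕ) : ℝ))
          ≤ ((min (r - 1) (m - 1) : ℕ) : ℝ) * (2 * Real.exp 1) ^ (r - 1) := by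
        have := Finset.sum_le_card_nsmul (Finset.Ico 1 t)
          (fun j => ((Nat.multichoose r j : ℕ) : ℝ)) ((2 * Real.exp 1) ^ (r - 1))
          (fun j hj => by
            rw [Finset.mem_Ico] at hj
            exact multichoose_mid hr hj.1 (by omega))
        rw [Nat.card_Ico, nsmul_eq_mul] at this
        refine this.trans ?_
        have : t - 1 = min (r - 1) (m - 1) := by omega
        rw [this]
      have e3 : (∑ j ∈ Finset.Ico t m, ((Nat.multichoose r j : ℕ) : ℝ))
          ≤ ((m - r : ℕ) : ℝ) * ((2 * Real.exp 1 / ((r : ℝ) - 1)) ^ (r - 1)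
            * (((m - 1 : ℕ) : ℝ)) ^ (r - 1)) := by
        have := Finset.sum_le_card_nsmul (Finset.Ico t m)
          (fun j => ((Nat.multichoose r j : ℕ) : ℝ))
          ((2 * Real.exp 1 / ((r : ℝ) - 1)) ^ (r - 1) * (((m - 1 : ℕ) : ℝ)) ^ (r - 1))
          (fun j hj => by
            rw [Finset.mem_Ico] at hj
            have hrj : r ≤ j := by omega
            refine (multichoose_tail hr hrj).trans ?_
            have hjm : (j:ℝ) ≤ ((m - 1 : ℕ) : ℝ) := by exact_mod_cast (by omega : j ≤ m - 1)
            have hb : (0:ℝ) ≤ (2 * Real.exp 1 / ((r:ℝ) - 1)) ^ (r - 1) := by positivity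
            exact mul_le_mul_of_nonneg_left (pow_le_pow_left₀ (by positivity) hjm _) hb)
        rw [Nat.card_Ico, nsmul_eq_mul] at this
        refine this.trans ?_
        have : m - t = m - r := by omega
        rw [this]
      push_cast at e1 e2 e3 ⊢
      linarith
  calc (Hm.rank : ℝ) ≤ ((∑ j ∈ Finset.range m, Nat.multichoose r j : ℕ) : ℝ) := by
        exact_mod_cast hcard ▸ hrankHm
    _ ≤ _ := key
end
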